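/- arXiv:2001.01607 — 3 statements merged into one kernel-verified Lean document; each statement's English description precedes it below -/
import Mathlib

section
/- Let G be a graph and let k ≥ 2 and s ≥ 1 be integers. If G does not contain a clique on k vertices nor a minimal separator of size larger than s, then the treewidth of G is at most (k−1)·s^3 − 1. -/
open SimpleGraph

variable {V : Type} [Fintype V] [DecidableEq V]

/-- `p` is a chordless (induced) path in `G`: a path such that the only edges of `G`
between its vertices are the edges of the path. -/
def IsInducedPathW (G : SimpleGraph V) {a b : V} (p : G.Walk a b) : Prop :=
  p.IsPath ∧ ∀ u v : V, u ∈ p.support → v ∈ p.support → G.Adj u v → p.toSubgraph.Adj u v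

/-- A hole of length `n` in `G`: an induced (chordless) cycle of length `n ≥ 4`,
given by an injection of `ZMod n` into `G` whose adjacencies are exactly the consecutive ones. -/
def IsHoleEmb (G : SimpleGraph V) (n : ℕ) (f : ZMod n → V) : Prop :=
  4 ≤ n ∧ Function.Injective f ∧
    ∀ i j : ZMod n, G.Adj (f i) (f j) ↔ (j = i + 1 ∨ i = j + 1)

/-- `G` contains an even hole (induced even cycle of length at least 4). -/
def ContainsEvenHole (G : SimpleGraph V) : Prop :=
  ∃ (n : ℕ) (f : ZMod n → V), IsHoleEmb G n f ∧ Even n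

/-- `G` contains a square (hole of length 4). -/
def ContainsSquare (G : SimpleGraph V) : Prop :=
  ∃ f : ZMod 4 → V, IsHoleEmb G 4 f

/-- `G` contains a theta as an induced subgraph: three internally vertex-disjoint chordless
paths from `a` to `b`, each of length at least 2, with no edges between the paths other than
those incident to `a` or `b` specified by the paths. -/
def ContainsTheta (G : SimpleGraph V) : Prop :=
  ∃ (a b : V) (p₁ p₂ p₃ : G.Walk a b),
    (IsInducedPathW G p₁ ∧ IsInducedPathW G p₂ ∧ IsInducedPathW G p₃) ∧
    (2 ≤ p₁.length ∧ 2 ≤ p₂.length ∧ 2 ≤ p₃.length) ∧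
    (∀ w : V, ((w ∈ p₁.support ∧ w ∈ p₂.support) ∨ (w ∈ p₁.support ∧ w ∈ p₃.support) ∨
          (w ∈ p₂.support ∧ w ∈ p₃.support)) → (w = a ∨ w = b)) ∧
    (∀ u w : V, u ≠ a → u ≠ b → w ≠ a → w ≠ b →
      ((u ∈ p₁.support ∧ w ∈ p₂.support) ∨ (u ∈ p₁.support ∧ w ∈ p₃.support) ∨
       (u ∈ p₂.support ∧ w ∈ p₃.support)) → ¬G.Adj u w)

/-- `G` contains a prism as an induced subgraph. -/
def ContainsPrism (G : SimpleGraph V) : Prop :=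
  ∃ (a₁ b₁ a₂ b₂ a₃ b₃ : V) (p₁ : G.Walk a₁ b₁) (p₂ : G.Walk a₂ b₂) (p₃ : G.Walk a₃ b₃),
    (IsInducedPathW G p₁ ∧ IsInducedPathW G p₂ ∧ IsInducedPathW G p₃) ∧
    (1 ≤ p₁.length ∧ 1 ≤ p₂.length ∧ 1 ≤ p₃.length) ∧
    (G.Adj a₁ a₂ ∧ G.Adj a₂ a₃ ∧ G.Adj a₁ a₃) ∧
    (G.Adj b₁ b₂ ∧ G.Adj b₂ b₃ ∧ G.Adj b₁ b₃) ∧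
    (∀ w : V, ¬(w ∈ p₁.support ∧ w ∈ p₂.support) ∧ ¬(w ∈ p₁.support ∧ w ∈ p₃.support) ∧
          ¬(w ∈ p₂.support ∧ w ∈ p₃.support)) ∧
    (∀ u w : V, u ∈ p₁.support → w ∈ p₂.support → G.Adj u w →
      (u = a₁ ∧ w = a₂) ∨ (u = b₁ ∧ w = b₂)) ∧
    (∀ u w : V, u ∈ p₁.support → w ∈ p₃.support → G.Adj u w →
      (u = a₁ ∧ w = a₃) ∨ (u = b₁ ∧ w = b₃)) ∧
    (∀ u w : V, u ∈ p₂.support → w ∈ p₃.support → G.Adj u w →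
      (u = a₂ ∧ w = a₃) ∨ (u = b₂ ∧ w = b₃))

/-- `G` contains a pyramid as an induced subgraph. -/
def ContainsPyramid (G : SimpleGraph V) : Prop :=
  ∃ (a b₁ b₂ b₃ : V) (p₁ : G.Walk a b₁) (p₂ : G.Walk a b₂) (p₃ : G.Walk a b₃),
    (IsInducedPathW G p₁ ∧ IsInducedPathW G p₂ ∧ IsInducedPathW G p₃) ∧
    (1 ≤ p₁.length ∧ 1 ≤ p₂.length ∧ 1 ≤ p₃.length) ∧
    ((2 ≤ p₁.length ∧ 2 ≤ p₂.length) ∨ (2 ≤ p₁.length ∧ 2 ≤ p₃.length) ∨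
     (2 ≤ p₂.length ∧ 2 ≤ p₃.length)) ∧
    (G.Adj b₁ b₂ ∧ G.Adj b₂ b₃ ∧ G.Adj b₁ b₃) ∧
    (∀ w : V, ((w ∈ p₁.support ∧ w ∈ p₂.support) ∨ (w ∈ p₁.support ∧ w ∈ p₃.support) ∨
          (w ∈ p₂.support ∧ w ∈ p₃.support)) → w = a) ∧
    (∀ u w : V, u ∈ p₁.support → w ∈ p₂.support → u ≠ a → w ≠ a → G.Adj u w →
      u = b₁ ∧ w = b₂) ∧
    (∀ u w : V, u ∈ p₁.support → w ∈ p₃.support → u ≠ a → w ≠ a → G.Adj u w →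
      u = b₁ ∧ w = b₃) ∧
    (∀ u w : V, u ∈ p₂.support → w ∈ p₃.support → u ≠ a → w ≠ a → G.Adj u w →
      u = b₂ ∧ w = b₃)

/-- `G` contains the cube as an induced subgraph: a hole of length 6 together with
two non-adjacent vertices `u, v` outside it, `u` adjacent to the even positions and
`v` adjacent to the odd positions. -/
def ContainsCube (G : SimpleGraph V) : Prop :=
  ∃ (f : ZMod 6 → V) (u v : V), IsHoleEmb G 6 f ∧
    u ∉ Set.range f ∧ v ∉ Set.range f ∧ ¬G.Adj u v ∧
    (∀ m : ZMod 6, G.Adj u (f m) ↔ (m = 0 ∨ m = 2 ∨ m = 4)) ∧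
    (∀ m : ZMod 6, G.Adj v (f m) ↔ (m = 1 ∨ m = 3 ∨ m = 5))

/-- `G` contains an even wheel: a hole plus a vertex outside it having at least 3 and
an even number of neighbors on the hole. -/
def ContainsEvenWheel (G : SimpleGraph V) : Prop :=
  ∃ (n : ℕ) (f : ZMod n → V) (u : V), IsHoleEmb G n f ∧ u ∉ Set.range f ∧
    3 ≤ {m : ZMod n | G.Adj u (f m)}.ncard ∧ Even {m : ZMod n | G.Adj u (f m)}.ncard

/-- `G` contains a butterfly: a wheel `(H,v)` with `N_H(v) = {a,b,c,d}`,
`ab, cd ∈ E(G)` and `bc, da ∉ E(G)`. -/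
def ContainsButterfly (G : SimpleGraph V) : Prop :=
  ∃ (n : ℕ) (f : ZMod n → V) (u : V), IsHoleEmb G n f ∧ u ∉ Set.range f ∧
    ∃ i j : ZMod n, i ≠ j ∧ i ≠ j + 1 ∧ i + 1 ≠ j ∧ i + 1 ≠ j + 1 ∧
      ¬G.Adj (f (i + 1)) (f j) ∧ ¬G.Adj (f (j + 1)) (f i) ∧
      (∀ m : ZMod n, G.Adj u (f m) ↔ (m = i ∨ m = i + 1 ∨ m = j ∨ m = j + 1))

/-- A 2-wheel in `G`: a hole `f` together with two distinct centers `u, v` outside the hole,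
each having at least three neighbors on the hole. -/
def Is2WheelCfg (G : SimpleGraph V) (n : ℕ) (f : ZMod n → V) (u v : V) : Prop :=
  IsHoleEmb G n f ∧ u ≠ v ∧ u ∉ Set.range f ∧ v ∉ Set.range f ∧
  3 ≤ {m : ZMod n | G.Adj u (f m)}.ncard ∧ 3 ≤ {m : ZMod n | G.Adj v (f m)}.ncard

/-- The 2-wheel `(f, {u,v})` is nested: the hole splits at `f i` and `f (i+d)` into two arcs,
with all neighbors of `u` on one arc and all neighbors of `v` on the other. -/
def NestedCfg (G : SimpleGraph V) (n : ℕ) (f : ZMod n → V) (u v : V) : Prop :=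
  ∃ (i : ZMod n) (d : ℕ), 1 ≤ d ∧ d < n ∧
    (∀ m : ZMod n, G.Adj u (f m) → ∃ e : ℕ, e ≤ d ∧ m = i + (e : ZMod n)) ∧
    (∀ m : ZMod n, G.Adj v (f m) → ∃ e : ℕ, e ≤ n - d ∧ m = i + (d : ZMod n) + (e : ZMod n))

/-- The 2-wheel `(f, {u,v})` is the cube. -/
def CubeCfg (G : SimpleGraph V) (n : ℕ) (f : ZMod n → V) (u v : V) : Prop :=
  n = 6 ∧ ∃ i : ZMod n,
    (∀ m : ZMod n, G.Adj u (f m) ↔ (m = i ∨ m = i + 2 ∨ m = i + 4)) ∧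
    (∀ m : ZMod n, G.Adj v (f m) ↔ (m = i + 1 ∨ m = i + 3 ∨ m = i + 5))

/-- The 2-wheel `(f, {u,v})` is a cousin wheel: `N_H(u) = {h₁,h₂,h₃}` and
`N_H(v) = {h₂,h₃,h₄}` for four consecutive vertices of the hole (or with `u, v` swapped). -/
def CousinCfg (G : SimpleGraph V) (n : ℕ) (f : ZMod n → V) (u v : V) : Prop :=
  (∃ i : ZMod n,
    (∀ m : ZMod n, G.Adj u (f m) ↔ (m = i ∨ m = i + 1 ∨ m = i + 2)) ∧
    (∀ m : ZMod n, G.Adj v (f m) ↔ (m = i + 1 ∨ m = i + 2 ∨ m = i + 3))) ∨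
  (∃ i : ZMod n,
    (∀ m : ZMod n, G.Adj v (f m) ↔ (m = i ∨ m = i + 1 ∨ m = i + 2)) ∧
    (∀ m : ZMod n, G.Adj u (f m) ↔ (m = i + 1 ∨ m = i + 2 ∨ m = i + 3)))

/-- A `u`-sector of the hole `f`: a subpath from `f i` to `f (i+d)` (`1 ≤ d < n`)
whose two ends are adjacent to `u` and whose internal vertices are not. -/
def IsSector (G : SimpleGraph V) (n : ℕ) (f : ZMod n → V) (u : V) (i : ZMod n) (d : ℕ) : Prop :=
  1 ≤ d ∧ d < n ∧ G.Adj u (f i) ∧ G.Adj u (f (i + (d : ZMod n))) ∧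
    ∀ m : ℕ, 0 < m → m < d → ¬G.Adj u (f (i + (m : ZMod n)))

/-- The class 𝒞: (theta, prism, pyramid, butterfly)-free graphs in which every 2-wheel
with non-adjacent centers is a nested wheel or a cousin wheel. -/
def InClassC (G : SimpleGraph V) : Prop :=
  ¬ContainsTheta G ∧ ¬ContainsPrism G ∧ ¬ContainsPyramid G ∧ ¬ContainsButterfly G ∧
  ∀ (n : ℕ) (f : ZMod n → V) (u v : V), Is2WheelCfg G n f u v → ¬G.Adj u v →
    (NestedCfg G n f u v ∨ CousinCfg G n f u v)

/-- `G` contains `S_{k,k,k}` as an induced subgraph: a root `r` and three legs of `k` edges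
each, with no other adjacencies among these vertices. -/
def ContainsSpider (G : SimpleGraph V) (k : ℕ) : Prop :=
  ∃ (r : V) (f : Fin 3 → Fin k → V),
    (∀ (j : Fin 3) (m : Fin k), f j m ≠ r) ∧
    (∀ (j₁ : Fin 3) (m₁ : Fin k) (j₂ : Fin 3) (m₂ : Fin k),
      f j₁ m₁ = f j₂ m₂ → j₁ = j₂ ∧ m₁ = m₂) ∧
    (∀ (j : Fin 3) (m : Fin k), G.Adj r (f j m) ↔ (m : ℕ) = 0) ∧
    (∀ (j₁ : Fin 3) (m₁ : Fin k) (j₂ : Fin 3) (m₂ : Fin k),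
      G.Adj (f j₁ m₁) (f j₂ m₂) ↔
        (j₁ = j₂ ∧ ((m₁ : ℕ) + 1 = (m₂ : ℕ) ∨ (m₂ : ℕ) + 1 = (m₁ : ℕ))))

/-- A `k`-span-wheel in `G`: a hole `f` of length `n`, with `x = f 0` and `y = f p`
non-adjacent, the two paths `P_A = f 0, f 1, …, f p` and `P_B = f 0, f (n-1), …, f p`,
and centers `c 0, …, c (k-1)` outside the hole such that `{c i} ∪ {x,y}` is independent,
every center has at least three neighbors on the hole and neighbors in the interiors of
both `P_A` and `P_B`, and the neighbors of the centers appear along both `P_A` and `P_B`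
(from `x` to `y`) in the order of the centers. -/
def IsSpanWheel (G : SimpleGraph V) (k n p : ℕ) (f : ZMod n → V) (c : Fin k → V) : Prop :=
  IsHoleEmb G n f ∧
  2 ≤ p ∧ p ≤ n - 2 ∧
  ¬G.Adj (f 0) (f (p : ZMod n)) ∧
  Function.Injective c ∧
  (∀ i : Fin k, c i ∉ Set.range f) ∧
  (∀ i j : Fin k, i ≠ j → ¬G.Adj (c i) (c j)) ∧
  (∀ i : Fin k, ¬G.Adj (c i) (f 0)) ∧
  (∀ i : Fin k, ¬G.Adj (c i) (f (p : ZMod n))) ∧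
  (∀ i : Fin k, 3 ≤ {m : ZMod n | G.Adj (c i) (f m)}.ncard) ∧
  (∀ i : Fin k, ∃ a : ℕ, 0 < a ∧ a < p ∧ G.Adj (c i) (f (a : ZMod n))) ∧
  (∀ i : Fin k, ∃ b : ℕ, p < b ∧ b < n ∧ G.Adj (c i) (f (b : ZMod n))) ∧
  (∀ i j : Fin k, i < j → ∀ a₁ a₂ : ℕ, a₁ ≤ p → a₂ ≤ p →
    G.Adj (c i) (f (a₁ : ZMod n)) → G.Adj (c j) (f (a₂ : ZMod n)) → a₁ ≤ a₂) ∧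
  (∀ i j : Fin k, i < j → ∀ b₁ b₂ : ℕ, p ≤ b₁ → b₁ ≤ n → p ≤ b₂ → b₂ ≤ n →
    G.Adj (c i) (f (b₁ : ZMod n)) → G.Adj (c j) (f (b₂ : ZMod n)) → b₂ ≤ b₁)

/-- `X` separates `s` from `t` in `G`: neither is in `X` and every walk from `s` to `t`
meets `X`. -/
def Separates (G : SimpleGraph V) (X : Set V) (s t : V) : Prop :=
  s ∉ X ∧ t ∉ X ∧ ∀ p : G.Walk s t, ∃ w ∈ p.support, w ∈ X

/-- `X` is a minimal separator of `G`: for some pair `s, t` it is an inclusion-wise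
minimal `st`-separator. -/
def MinSeparator (G : SimpleGraph V) (X : Set V) : Prop :=
  ∃ s t : V, Separates G X s t ∧ ∀ Y ⊆ X, Separates G Y s t → Y = X

/-- `A` is a connected component of `G ∖ C` that is full to `C`. -/
def IsFullComponent (G : SimpleGraph V) (C A : Set V) : Prop :=
  A.Nonempty ∧ Disjoint A C ∧ (G.induce A).Connected ∧
  (∀ a ∈ A, ∀ w : V, G.Adj a w → w ∈ A ∪ C) ∧
  (∀ x ∈ C, ∃ a ∈ A, G.Adj x a)

/-- A tree decomposition of `G` with tree `T` and bags `B`. -/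
def IsTreeDecomp (G : SimpleGraph V) {ι : Type} (T : SimpleGraph ι) (B : ι → Finset V) : Prop :=
  T.IsTree ∧
  (∀ v : V, ∃ i, v ∈ B i) ∧
  (∀ u v : V, G.Adj u v → ∃ i, u ∈ B i ∧ v ∈ B i) ∧
  (∀ (v : V) (i j : ι), v ∈ B i → v ∈ B j →
    ∀ (p : T.Walk i j), p.IsPath → ∀ x ∈ p.support, v ∈ B x)

/-- The treewidth of a finite graph: the least `w` such that `G` has a tree decomposition
all of whose bags have size at most `w + 1`. -/
noncomputable def treewidth (G : SimpleGraph V) : ℕ :=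
  sInf {w : ℕ | ∃ (m : ℕ) (T : SimpleGraph (Fin m)) (B : Fin m → Finset V),
    IsTreeDecomp G T B ∧ ∀ i, (B i).card ≤ w + 1}

/-- A graph is chordal iff it has no hole. -/
def IsChordal (G : SimpleGraph V) : Prop :=
  ¬∃ (n : ℕ) (f : ZMod n → V), IsHoleEmb G n f

/-- `H` is obtained from `G` by a minimal fill-in (minimal chordal completion). -/
def IsMinimalChordalCompletion (G H : SimpleGraph V) : Prop :=
  G ≤ H ∧ IsChordal H ∧ ∀ H' : SimpleGraph V, G ≤ H' → H' ≤ H → IsChordal H' → H' = H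

/-- `Ω` is a potential maximal clique of `G`: a maximal clique of some minimal chordal
completion of `G`. -/
def IsPMC (G : SimpleGraph V) (Ω : Set V) : Prop :=
  ∃ H : SimpleGraph V, IsMinimalChordalCompletion G H ∧ H.IsClique Ω ∧
    ∀ Ω' : Set V, H.IsClique Ω' → Ω ⊆ Ω' → Ω' = Ω

/-- `n` satisfies the Ramsey property for `(t, k)`: every graph on `n` vertices has a
clique of size `t` or an independent set of size `k`. -/
def RamseyProp (n t k : ℕ) : Prop :=
  ∀ G : SimpleGraph (Fin n),
    (∃ S : Finset (Fin n), G.IsNClique t S) ∨ (∃ S : Finset (Fin n), Gᶜ.IsNClique k S)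

/-- The Ramsey number `R(t, k)`. -/
noncomputable def ramseyNumber (t k : ℕ) : ℕ := sInf {n : ℕ | RamseyProp n t k}

/-!
Eliminate the vertices outside a set `A` and keep on `A` the fill graph, in which two vertices
are adjacent when they are joined by a path of `G` whose interior avoids `A`; the components of
the eliminated part are the regions. Throughout, every region has at most `s` boundary vertices.
A clique `K` of the fill graph is then small: either it is a clique of `G`, so `|K| < k`, or it
contains `x, y` non-adjacent in `G`; a minimal `x`–`y` separator `Y` has `|Y| ≤ s` and meets
the lift of every fill path `x z y`, either at `z` or in a region with `z` on its boundary, so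
`|K| ≤ s² + 2 ≤ s³`. If the fill graph on `A` is not complete, take `u ∈ A` and a component `D`
of the fill graph minus the closed neighbourhood of `u`. The neighbourhood `N` of `D` separates
`u` from `D`, minimally since every vertex of `N` is adjacent to `u` and to `D`, so `|N| ≤ s`;
eliminating `D`, resp. `A \ (D ∪ N)`, keeps the invariant and turns `N` into a clique. Tree
decompositions of `A \ D` and `D ∪ N` obtained by induction then glue along bags containing `N`.
-/

namespace SimpleGraph

variable {α : Type} {G : SimpleGraph α} {s t : Set α} {a b c : α}

/-- `a` and `b` are joined by a walk of `G` all of whose vertices lie in `s`; every vertex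
reaches itself, even outside `s`. -/
def ReachIn (G : SimpleGraph α) (s : Set α) : α → α → Prop :=
  Relation.ReflTransGen fun x y => G.Adj x y ∧ x ∈ s ∧ y ∈ s

namespace ReachIn

theorem single (h : G.Adj a b) (ha : a ∈ s) (hb : b ∈ s) : G.ReachIn s a b :=
  Relation.ReflTransGen.single ⟨h, ha, hb⟩

theorem trans (h : G.ReachIn s a b) (h' : G.ReachIn s b c) : G.ReachIn s a c :=
  Relation.ReflTransGen.trans h h'

theorem tail (h : G.ReachIn s a b) (hbc : G.Adj b c) (hb : b ∈ s) (hc : c ∈ s) :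
    G.ReachIn s a c :=
  Relation.ReflTransGen.tail h ⟨hbc, hb, hc⟩

theorem symm (h : G.ReachIn s a b) : G.ReachIn s b a := by
  induction h with
  | refl => exact .refl
  | tail _ hbc ih => exact (single hbc.1.symm hbc.2.2 hbc.2.1).trans ih

theorem mem (h : G.ReachIn s a b) (ha : a ∈ s) : b ∈ s := by
  induction h with
  | refl => exact ha
  | tail _ hbc => exact hbc.2.2

theorem restrict (h : G.ReachIn s a b) (ht : ∀ y, G.ReachIn s a y → y ∈ t) :
    G.ReachIn t a b := by
  induction h with
  | refl => exact .refl
  | tail hab hbc ih => exact ih.tail hbc.1 (ht _ hab) (ht _ (hab.tail hbc))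

theorem lift {H : SimpleGraph α} (h : G.ReachIn s a b)
    (hadj : ∀ x y, G.Adj x y → x ∈ s → y ∈ s → H.ReachIn t x y) : H.ReachIn t a b := by
  induction h with
  | refl => exact .refl
  | tail _ hbc ih => exact ih.trans (hadj _ _ hbc.1 hbc.2.1 hbc.2.2)

theorem mono (h : G.ReachIn s a b) (hst : s ⊆ t) : G.ReachIn t a b :=
  h.lift fun _ _ hxy hx hy => single hxy (hst hx) (hst hy)

theorem exists_walk (h : G.ReachIn s a b) (ha : a ∈ s) :
    ∃ p : G.Walk a b, ∀ z ∈ p.support, z ∈ s := by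
  induction h with
  | refl => exact ⟨.nil, by simpa using ha⟩
  | tail _ hbc ih =>
    obtain ⟨p, hp⟩ := ih
    refine ⟨p.concat hbc.1, fun z hz => ?_⟩
    simp only [Walk.support_concat, List.mem_append, List.mem_singleton] at hz
    rcases hz with hz | rfl
    exacts [hp z hz, hbc.2.2]

end ReachIn

theorem exists_separator_subset_card_le [Finite α] {k : ℕ}
    (hsep : ¬∃ X : Set α, MinSeparator G X ∧ k < X.ncard) {X : Set α}
    (h : Separates G X a b) : ∃ Y : Finset α, ↑Y ⊆ X ∧ Separates G ↑Y a b ∧ Y.card ≤ k := by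
  obtain ⟨Y, hYX, hY⟩ := exists_minimal_le_of_wellFoundedLT (Separates G · a b) X h
  have hmin : MinSeparator G Y := ⟨a, b, hY.prop, fun Z hZY hZ => le_antisymm hZY (hY.2 hZ hZY)⟩
  refine ⟨(Set.toFinite Y).toFinset, by simpa using hYX, by simpa using hY.prop, ?_⟩
  rw [← Set.ncard_eq_toFinset_card]
  exact not_lt.1 fun hlt => hsep ⟨Y, hmin, hlt⟩

theorem IsClique.card_lt_of_cliqueFree {K : Finset α} {k : ℕ} (hK : G.IsClique (K : Set α))
    (h : G.CliqueFree k) : K.card < k := by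
  by_contra! hk
  obtain ⟨T, hTK, hT⟩ := Finset.exists_subset_card_eq hk
  exact h T ⟨hK.subset (by exact_mod_cast hTK), hT⟩

theorem separates_of_not_adj (hne : a ≠ b) (h : ¬G.Adj a b) :
    Separates G {z | z ≠ a ∧ z ≠ b} a b := by
  refine ⟨by simp, by simp [hne.symm], fun p => ?_⟩
  cases p with
  | nil => exact absurd rfl hne
  | @cons _ c _ hac q =>
    refine ⟨c, by simp, hac.ne', ?_⟩
    rintro rfl
    exact h hac

section Fill

variable {A A' K : Finset α} {r x y z : α}

/-- The vertices of `A` adjacent to the region of `r`: the vertices outside `A` that `r` reaches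
without entering `A`. -/
noncomputable def regionBoundary (G : SimpleGraph α) (A : Finset α) (r : α) : Finset α :=
  open Classical in A.filter fun x => ∃ z ∉ A, G.ReachIn (↑A)ᶜ r z ∧ G.Adj z x

/-- The graph left on `A` after eliminating the vertices outside `A`: two vertices of `A` are
adjacent if they are adjacent in `G` or lie on the boundary of a common region, i.e. if some
path of `G` joins them through vertices outside `A`. -/
def fill (G : SimpleGraph α) (A : Finset α) : SimpleGraph α where
  Adj x y := x ≠ y ∧ x ∈ A ∧ y ∈ A ∧
    (G.Adj x y ∨ ∃ r ∉ A, x ∈ G.regionBoundary A r ∧ y ∈ G.regionBoundary A r)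
  symm := ⟨fun _ _ ⟨hne, hx, hy, h⟩ =>
    ⟨hne.symm, hy, hx, h.imp (fun h => h.symm) fun ⟨r, hr, hxr, hyr⟩ => ⟨r, hr, hyr, hxr⟩⟩⟩
  loopless := ⟨fun _ h => h.1 rfl⟩

theorem fill_adj : (G.fill A).Adj x y ↔ x ≠ y ∧ x ∈ A ∧ y ∈ A ∧
    (G.Adj x y ∨ ∃ r ∉ A, x ∈ G.regionBoundary A r ∧ y ∈ G.regionBoundary A r) :=
  Iff.rfl

def BoundariesAtMost (G : SimpleGraph α) (A : Finset α) (k : ℕ) : Prop :=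
  ∀ r ∉ A, (G.regionBoundary A r).card ≤ k

theorem mem_regionBoundary :
    x ∈ G.regionBoundary A r ↔ x ∈ A ∧ ∃ z ∉ A, G.ReachIn (↑A)ᶜ r z ∧ G.Adj z x := by
  classical
  simp [regionBoundary]

theorem regionBoundary_subset : G.regionBoundary A r ⊆ A := fun _ hx =>
  (mem_regionBoundary.1 hx).1

theorem regionBoundary_congr {r' : α} (h : G.ReachIn (↑A)ᶜ r r') :
    G.regionBoundary A r = G.regionBoundary A r' := by
  ext x
  simp only [mem_regionBoundary]
  exact and_congr_right fun _ => exists_congr fun z => and_congr_right fun _ =>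
    and_congr_left fun _ => ⟨h.symm.trans, h.trans⟩

theorem mem_regionBoundary_of_adj (hx : x ∈ A) (hr : r ∉ A) (h : G.Adj r x) :
    x ∈ G.regionBoundary A r :=
  mem_regionBoundary.2 ⟨hx, r, hr, .refl, h⟩

theorem fill_adj_of_adj (h : G.Adj x y) (hx : x ∈ A) (hy : y ∈ A) : (G.fill A).Adj x y :=
  fill_adj.2 ⟨h.ne, hx, hy, .inl h⟩

theorem fill_adj_of_mem_regionBoundary (hr : r ∉ A) (hx : x ∈ G.regionBoundary A r)
    (hy : y ∈ G.regionBoundary A r) (hne : x ≠ y) : (G.fill A).Adj x y :=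
  fill_adj.2 ⟨hne, regionBoundary_subset hx, regionBoundary_subset hy, .inr ⟨r, hr, hx, hy⟩⟩

theorem isClique_fill_of_subset_regionBoundary (hr : r ∉ A) (hK : K ⊆ G.regionBoundary A r) :
    (G.fill A).IsClique K := fun _ hx _ hy hne =>
  fill_adj_of_mem_regionBoundary hr (hK hx) (hK hy) hne

theorem exists_reachIn_adj_of_fill_adj (hA : A' ⊆ A) (h : (G.fill A).Adj x y) (hy : y ∉ A') :
    ∃ z ∉ A', G.ReachIn (↑A')ᶜ y z ∧ G.Adj z x := by
  have hcompl : ((↑A)ᶜ : Set α) ⊆ (↑A')ᶜ := Set.compl_subset_compl.2 (by exact_mod_cast hA)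
  obtain ⟨-, -, -, hxy | ⟨r, hr, hx, hy'⟩⟩ := fill_adj.1 h
  · exact ⟨y, hy, .refl, hxy.symm⟩
  obtain ⟨-, zx, hzx, hrzx, hzxx⟩ := mem_regionBoundary.1 hx
  obtain ⟨-, zy, hzy, hrzy, hzyy⟩ := mem_regionBoundary.1 hy'
  refine ⟨zx, fun h => hzx (hA h), ?_, hzxx⟩
  exact (ReachIn.single (s := (↑A')ᶜ) hzyy.symm hy fun h => hzy (hA h)).trans
    ((hrzy.symm.trans hrzx).mono hcompl)

theorem mem_regionBoundary_of_fill_adj (hA : A' ⊆ A) (h : (G.fill A).Adj x y) (hx : x ∈ A')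
    (hy : y ∉ A') : x ∈ G.regionBoundary A' y := by
  obtain ⟨z, hz, hyz, hzx⟩ := exists_reachIn_adj_of_fill_adj hA h hy
  exact mem_regionBoundary.2 ⟨hx, z, hz, hyz, hzx⟩

theorem reachIn_of_fill_adj (hA : A' ⊆ A) (h : (G.fill A).Adj x y) (hx : x ∉ A') (hy : y ∉ A') :
    G.ReachIn (↑A')ᶜ y x := by
  obtain ⟨z, hz, hyz, hzx⟩ := exists_reachIn_adj_of_fill_adj hA h hy
  exact hyz.tail hzx hz hx

theorem fill_adj_of_subset (hA : A' ⊆ A) (h : (G.fill A).Adj x y) (hx : x ∈ A') (hy : y ∈ A') :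
    (G.fill A').Adj x y := by
  obtain ⟨hne, -, -, hxy | ⟨r, hr, hxr, hyr⟩⟩ := fill_adj.1 h
  · exact fill_adj_of_adj hxy hx hy
  have hcompl : ((↑A)ᶜ : Set α) ⊆ (↑A')ᶜ := Set.compl_subset_compl.2 (by exact_mod_cast hA)
  have hmono {v} (hv : v ∈ A') (hvr : v ∈ G.regionBoundary A r) : v ∈ G.regionBoundary A' r := by
    obtain ⟨-, z, hz, hrz, hzv⟩ := mem_regionBoundary.1 hvr
    exact mem_regionBoundary.2 ⟨hv, z, fun h => hz (hA h), hrz.mono hcompl, hzv⟩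
  exact fill_adj_of_mem_regionBoundary (fun h => hr (hA h)) (hmono hx hxr) (hmono hy hyr) hne

theorem le_fill_univ [Fintype α] : G ≤ G.fill Finset.univ := fun _ _ h =>
  fill_adj_of_adj h (Finset.mem_univ _) (Finset.mem_univ _)

theorem IsClique.fill_of_subset (hK : (G.fill A).IsClique K) (hA : A' ⊆ A) (hKA : K ⊆ A') :
    (G.fill A').IsClique K := fun _ hx _ hy hne =>
  fill_adj_of_subset hA (hK hx hy hne) (hKA hx) (hKA hy)

theorem exists_walk_of_fill_adj (h : (G.fill A).Adj x y) :
    ∃ p : G.Walk x y, ∀ w ∈ p.support,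
      w = x ∨ w = y ∨ (w ∉ A ∧ x ∈ G.regionBoundary A w ∧ y ∈ G.regionBoundary A w) := by
  obtain ⟨-, -, -, hxy | ⟨r, hr, hx, hy⟩⟩ := fill_adj.1 h
  · exact ⟨hxy.toWalk, by simp⟩
  obtain ⟨-, zx, hzx, hrzx, hzxx⟩ := mem_regionBoundary.1 hx
  obtain ⟨-, zy, hzy, hrzy, hzyy⟩ := mem_regionBoundary.1 hy
  set R : Set α := {w | w ∉ A ∧ G.ReachIn (↑A)ᶜ r w}
  have hR : G.ReachIn R zx zy := (hrzx.symm.trans hrzy).restrict fun w hw =>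
    ⟨hw.mem hzx, hrzx.trans hw⟩
  obtain ⟨q, hq⟩ := hR.exists_walk ⟨hzx, hrzx⟩
  refine ⟨.cons hzxx.symm (q.append (.cons hzyy .nil)), fun w hw => ?_⟩
  simp only [Walk.support_cons, Walk.support_append, Walk.support_nil, List.tail_cons,
    List.mem_cons, List.mem_append, List.not_mem_nil, or_false] at hw
  obtain rfl | hw | rfl := hw
  · exact .inl rfl
  · obtain ⟨hwA, hrw⟩ := hq w hw
    rw [← regionBoundary_congr hrw]
    exact .inr (.inr ⟨hwA, hx, hy⟩)
  · exact .inr (.inl rfl)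

theorem exists_walk_of_fill_walk {a b : α} (q : (G.fill A).Walk a b) :
    ∃ p : G.Walk a b, ∀ z ∈ p.support, z ∈ A → z ∈ q.support := by
  induction q with
  | nil => exact ⟨.nil, by simp⟩
  | cons h _ ih =>
    obtain ⟨p, hp⟩ := ih
    obtain ⟨p₀, hp₀⟩ := exists_walk_of_fill_adj h
    refine ⟨p₀.append p, fun z hz hzA => ?_⟩
    rw [Walk.support_append, List.mem_append] at hz
    rcases hz with hz | hz
    · obtain rfl | rfl | h := hp₀ z hz
      · simp
      · simp
      · exact absurd hzA h.1
    · exact List.mem_cons_of_mem _ (hp z (List.mem_of_mem_tail hz) hzA)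

theorem Separates.fill {X : Set α} {a b : α} (hXA : X ⊆ A) (h : Separates G X a b) :
    Separates (G.fill A) X a b := by
  refine ⟨h.1, h.2.1, fun q => ?_⟩
  obtain ⟨p, hp⟩ := exists_walk_of_fill_walk q
  obtain ⟨w, hw, hwX⟩ := h.2.2 p
  exact ⟨w, hp w hw (hXA hwX), hwX⟩

/-- A walk of `G` avoiding `X` projects to a walk of the fill graph avoiding `X`, started at the
walk's first vertex if it is in `A`, and otherwise at any vertex on the boundary of its region. -/
theorem reachIn_fill_of_walk {X : Set α} {b : α} (hb : b ∈ A) :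
    ∀ {x : α} (p : G.Walk x b), (∀ z ∈ p.support, z ∉ X) → ∀ a ∈ A, a ∉ X →
      (a = x ∨ x ∉ A ∧ a ∈ G.regionBoundary A x) → (G.fill A).ReachIn Xᶜ a b := by
  intro x p
  induction p with
  | nil =>
    rintro - a - - (rfl | ⟨hxA, -⟩)
    exacts [.refl, absurd hb hxA]
  | @cons x c _ hxc q ih =>
    intro hp a haA haX hax
    have hq := ih hb fun z hz => hp z (List.mem_cons_of_mem _ hz)
    have hcX : c ∉ X := hp c (by simp)
    by_cases hc : c ∈ A
    · by_cases hac : a = c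
      · exact hac ▸ hq c hc hcX (.inl rfl)
      refine ReachIn.single ?_ haX hcX |>.trans (hq c hc hcX (.inl rfl))
      rcases hax with rfl | ⟨hxA, hax⟩
      · exact fill_adj_of_adj hxc haA hc
      · exact fill_adj_of_mem_regionBoundary hxA hax (mem_regionBoundary_of_adj hc hxA hxc) hac
    · refine hq a haA haX (.inr ⟨hc, ?_⟩)
      rcases hax with rfl | ⟨hxA, hax⟩
      · exact mem_regionBoundary_of_adj haA hc hxc.symm
      · rwa [← regionBoundary_congr (ReachIn.single hxc hxA hc)]

theorem Separates.of_fill {X : Set α} {a b : α} (ha : a ∈ A) (hb : b ∈ A)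
    (h : Separates (G.fill A) X a b) : Separates G X a b := by
  refine ⟨h.1, h.2.1, fun p => ?_⟩
  by_contra! hp
  obtain ⟨q, hq⟩ := (reachIn_fill_of_walk hb p hp a ha h.1 (.inl rfl)).exists_walk h.1
  obtain ⟨w, hw, hwX⟩ := h.2.2 q
  exact hq w hw hwX

/-- The witness is the last vertex of `A` on a walk from `a` to `z` avoiding `A'`. -/
theorem exists_mem_regionBoundary_of_reachIn {a : α} (ha : a ∈ A)
    (h : G.ReachIn (↑A')ᶜ a z) (hz : z ∉ A) :
    ∃ y ∈ A, y ∉ A' ∧ y ∈ G.regionBoundary A z := by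
  induction h with
  | refl => exact absurd ha hz
  | @tail y z _ hyz ih =>
    by_cases hy : y ∈ A
    · exact ⟨y, hy, hyz.2.1, mem_regionBoundary_of_adj hy hz hyz.1.symm⟩
    · obtain ⟨y', hy'A, hy'A', hy'⟩ := ih hy
      refine ⟨y', hy'A, hy'A', ?_⟩
      rwa [← regionBoundary_congr (ReachIn.single hyz.1 hy hz)]

theorem exists_fill_adj_of_reachIn {a : α} (hA : A' ⊆ A) (ha : a ∈ A)
    (h : G.ReachIn (↑A')ᶜ a z) (hz : z ∉ A') (hx : x ∈ A') (hzx : G.Adj z x) :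
    ∃ y ∈ A, y ∉ A' ∧ (G.fill A).Adj x y := by
  by_cases hzA : z ∈ A
  · exact ⟨z, hzA, hz, fill_adj_of_adj hzx.symm (hA hx) hzA⟩
  obtain ⟨y, hyA, hyA', hy⟩ := exists_mem_regionBoundary_of_reachIn ha h hzA
  exact ⟨y, hyA, hyA', fill_adj_of_mem_regionBoundary hzA
    (mem_regionBoundary_of_adj (hA hx) hzA hzx) hy (ne_of_mem_of_not_mem hx hyA')⟩

/-- When the vertices of `A \ A'` are eliminated, a region either avoids `A` (and its boundary
can only shrink) or contains a vertex of `A \ A'` (and its boundary consists of fill neighbours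
of `A \ A'`). -/
theorem BoundariesAtMost.of_subset {k : ℕ} {S : Finset α} (h : G.BoundariesAtMost A k)
    (hA : A' ⊆ A) (hS : S.card ≤ k)
    (hSA : ∀ x ∈ A', ∀ y ∈ A, y ∉ A' → (G.fill A).Adj x y → x ∈ S) :
    G.BoundariesAtMost A' k := by
  intro r hr
  by_cases hmeet : ∃ a ∈ A, G.ReachIn (↑A')ᶜ r a
  · obtain ⟨a, ha, hra⟩ := hmeet
    refine (Finset.card_le_card fun x hx => ?_).trans hS
    obtain ⟨hx, z, hz, hrz, hzx⟩ := mem_regionBoundary.1 hx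
    obtain ⟨y, hyA, hyA', hxy⟩ :=
      exists_fill_adj_of_reachIn hA ha (hra.symm.trans hrz) hz hx hzx
    exact hSA x hx y hyA hyA' hxy
  push Not at hmeet
  have hrA : r ∉ A := fun hrA => hmeet r hrA .refl
  refine (Finset.card_le_card fun x hx => ?_).trans (h r hrA)
  obtain ⟨hx, z, hz, hrz, hzx⟩ := mem_regionBoundary.1 hx
  exact mem_regionBoundary.2 ⟨hA hx, z, fun hzA => hmeet z hzA hrz,
    hrz.restrict fun y hy hyA => hmeet y hyA hy, hzx⟩

theorem exists_mem_separator_of_fill_adj {Y : Set α} (hY : Separates G Y x y)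
    (hxz : (G.fill A).Adj x z) (hzy : (G.fill A).Adj z y) :
    ∃ v ∈ Y, v = z ∨ v ∉ A ∧ z ∈ G.regionBoundary A v := by
  obtain ⟨p₁, hp₁⟩ := exists_walk_of_fill_adj hxz
  obtain ⟨p₂, hp₂⟩ := exists_walk_of_fill_adj hzy
  obtain ⟨v, hv, hvY⟩ := hY.2.2 (p₁.append p₂)
  have hvx : v ≠ x := ne_of_mem_of_not_mem hvY hY.1
  have hvy : v ≠ y := ne_of_mem_of_not_mem hvY hY.2.1
  refine ⟨v, hvY, ?_⟩
  rw [Walk.support_append, List.mem_append] at hv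
  rcases hv with hv | hv
  · rcases hp₁ v hv with h | h | h
    exacts [absurd h hvx, .inl h, .inr ⟨h.1, h.2.2⟩]
  · rcases hp₂ v (List.mem_of_mem_tail hv) with h | h | h
    exacts [.inl h, absurd h hvy, .inr ⟨h.1, h.2.1⟩]

theorem card_le_of_isClique_fill_of_not_adj [Finite α] [DecidableEq α] {k : ℕ}
    (hsep : ¬∃ X : Set α, MinSeparator G X ∧ k < X.ncard) (hA : G.BoundariesAtMost A k)
    (hK : (G.fill A).IsClique K) (hx : x ∈ K) (hy : y ∈ K) (hne : x ≠ y) (hxy : ¬G.Adj x y) :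
    K.card ≤ k * k + 2 := by
  obtain ⟨Y, -, hY, hYk⟩ := exists_separator_subset_card_le hsep (separates_of_not_adj hne hxy)
  have hcover : K \ {x, y} ⊆ Y.biUnion fun v => if v ∈ A then {v} else G.regionBoundary A v := by
    intro z hz
    obtain ⟨hzK, hzxy⟩ := Finset.mem_sdiff.1 hz
    simp only [Finset.mem_insert, Finset.mem_singleton, not_or] at hzxy
    have hxz := hK hx hzK (Ne.symm hzxy.1)
    obtain ⟨v, hvY, rfl | ⟨hvA, hzv⟩⟩ :=
      exists_mem_separator_of_fill_adj hY hxz (hK hzK hy hzxy.2)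
    · exact Finset.mem_biUnion.2 ⟨v, hvY, by simp [(fill_adj.1 hxz).2.2.1]⟩
    · exact Finset.mem_biUnion.2 ⟨v, hvY, by simpa [hvA] using hzv⟩
  calc K.card ≤ (K \ {x, y}).card + ({x, y} : Finset α).card :=
        Finset.card_le_card_sdiff_add_card
    _ ≤ ∑ v ∈ Y, (if v ∈ A then {v} else G.regionBoundary A v).card + 2 :=
        add_le_add ((Finset.card_le_card hcover).trans Finset.card_biUnion_le)
          (Finset.card_le_two)
    _ ≤ ∑ _v ∈ Y, k + 2 := by
        gcongr with v hv
        split_ifs with hvA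
        · exact (Finset.card_singleton v).trans_le ((Finset.card_pos.2 ⟨v, hv⟩).trans_le hYk)
        · exact hA v hvA
    _ ≤ k * k + 2 := by
        rw [Finset.sum_const, smul_eq_mul]
        gcongr

theorem card_le_of_isClique_fill [Finite α] [DecidableEq α] {k s : ℕ} (hs : 1 ≤ s)
    (hclique : G.CliqueFree k) (hsep : ¬∃ X : Set α, MinSeparator G X ∧ s < X.ncard)
    (hA : G.BoundariesAtMost A s) (hK : (G.fill A).IsClique K) : K.card ≤ (k - 1) * s ^ 3 := by
  by_cases hG : G.IsClique (K : Set α)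
  · calc K.card ≤ (k - 1) * 1 := by have := hG.card_lt_of_cliqueFree hclique; omega
      _ ≤ (k - 1) * s ^ 3 := Nat.mul_le_mul_left _ (Nat.one_le_pow _ _ hs)
  obtain ⟨x, hx, y, hy, hne, hxy⟩ : ∃ x ∈ K, ∃ y ∈ K, x ≠ y ∧ ¬G.Adj x y := by
    simpa [IsClique, Set.Pairwise] using hG
  have hk₂ : 2 ≤ k := by
    by_contra! hk
    exact (cliqueFree_one.1 (hclique.mono (by omega))).false x
  have hs₂ : 2 ≤ s := by
    obtain ⟨r, hr, hxr, hyr⟩ := ((fill_adj.1 (hK hx hy hne)).2.2.2).resolve_left hxy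
    calc 2 = ({x, y} : Finset α).card := (Finset.card_pair hne).symm
      _ ≤ (G.regionBoundary A r).card :=
        Finset.card_le_card (by simp [Finset.insert_subset_iff, hxr, hyr])
      _ ≤ s := hA r hr
  calc K.card ≤ s * s + 2 := card_le_of_isClique_fill_of_not_adj hsep hA hK hx hy hne hxy
    _ ≤ 1 * s ^ 3 := by nlinarith
    _ ≤ (k - 1) * s ^ 3 := Nat.mul_le_mul_right _ (by omega)

end Fill

section Split

variable {A K D : Finset α} {u w x d : α}

noncomputable def farFrom (G : SimpleGraph α) (A : Finset α) (u : α) : Finset α :=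
  open Classical in A.filter fun x => x ≠ u ∧ ¬(G.fill A).Adj u x

noncomputable def farComp (G : SimpleGraph α) (A : Finset α) (u w : α) : Finset α :=
  open Classical in (G.farFrom A u).filter ((G.fill A).ReachIn ↑(G.farFrom A u) w)

noncomputable def fillNbhd (G : SimpleGraph α) (A D : Finset α) : Finset α :=
  open Classical in A.filter fun x => x ∉ D ∧ ∃ d ∈ D, (G.fill A).Adj x d

theorem mem_farFrom : x ∈ G.farFrom A u ↔ x ∈ A ∧ x ≠ u ∧ ¬(G.fill A).Adj u x := by
  classical
  simp [farFrom]

theorem mem_farComp :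
    x ∈ G.farComp A u w ↔ x ∈ G.farFrom A u ∧ (G.fill A).ReachIn ↑(G.farFrom A u) w x := by
  classical
  simp [farComp]

theorem mem_fillNbhd : x ∈ G.fillNbhd A D ↔ x ∈ A ∧ x ∉ D ∧ ∃ d ∈ D, (G.fill A).Adj x d := by
  classical
  simp [fillNbhd]

theorem self_mem_farComp (hw : w ∈ G.farFrom A u) : w ∈ G.farComp A u w :=
  mem_farComp.2 ⟨hw, .refl⟩

theorem farComp_subset : G.farComp A u w ⊆ A := fun _ hx =>
  (mem_farFrom.1 (mem_farComp.1 hx).1).1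

theorem fillNbhd_subset : G.fillNbhd A D ⊆ A := fun _ hx => (mem_fillNbhd.1 hx).1

theorem not_mem_farComp_self : u ∉ G.farComp A u w := fun hu =>
  (mem_farFrom.1 (mem_farComp.1 hu).1).2.1 rfl

theorem reachIn_farComp (hd : d ∈ G.farComp A u w) :
    (G.fill A).ReachIn ↑(G.farComp A u w) w d := by
  obtain ⟨hdfar, hwd⟩ := mem_farComp.1 hd
  exact hwd.restrict fun y hy => mem_farComp.2 ⟨hy.mem (hwd.symm.mem hdfar), hy⟩

theorem fill_adj_of_mem_fillNbhd_farComp (hx : x ∈ G.fillNbhd A (G.farComp A u w)) :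
    (G.fill A).Adj u x := by
  obtain ⟨hxA, hxD, d, hd, hxd⟩ := mem_fillNbhd.1 hx
  obtain ⟨hdfar, hwd⟩ := mem_farComp.1 hd
  have hxu : x ≠ u := by
    rintro rfl
    exact (mem_farFrom.1 hdfar).2.2 hxd
  by_contra hux
  have hxfar : x ∈ G.farFrom A u := mem_farFrom.2 ⟨hxA, hxu, hux⟩
  exact hxD (mem_farComp.2 ⟨hxfar, hwd.tail hxd.symm hdfar hxfar⟩)

theorem not_mem_fillNbhd_farComp_self : u ∉ G.fillNbhd A (G.farComp A u w) := fun hu =>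
  (fill_adj_of_mem_fillNbhd_farComp hu).ne rfl

theorem card_fillNbhd_farComp_le [Finite α] {k : ℕ}
    (hsep : ¬∃ X : Set α, MinSeparator G X ∧ k < X.ncard) (hu : u ∈ A)
    (hw : w ∈ G.farFrom A u) : (G.fillNbhd A (G.farComp A u w)).card ≤ k := by
  set D := G.farComp A u w
  have hwD : w ∈ D := self_mem_farComp hw
  have hsepN : Separates (G.fill A) ↑(G.fillNbhd A D) u w := by
    refine ⟨not_mem_fillNbhd_farComp_self, fun h => (mem_fillNbhd.1 h).2.1 hwD, fun q => ?_⟩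
    obtain ⟨e, he, he₁, he₂⟩ := q.exists_boundary_dart (↑D)ᶜ not_mem_farComp_self (by simpa)
    refine ⟨e.fst, q.dart_fst_mem_support_of_mem_darts he, mem_fillNbhd.2
      ⟨(fill_adj.1 e.adj).2.1, he₁, e.snd, by simpa using he₂, e.adj⟩⟩
  obtain ⟨Y, hYN, hY, hYk⟩ :=
    exists_separator_subset_card_le hsep (hsepN.of_fill hu (farComp_subset hwD))
  refine (Finset.card_le_card fun x hx => ?_).trans hYk
  obtain ⟨-, -, d, hd, hxd⟩ := mem_fillNbhd.1 hx
  obtain ⟨q, hq⟩ := (reachIn_farComp hd).symm.exists_walk hd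
  have hYA : (Y : Set α) ⊆ A := hYN.trans (by simpa using fillNbhd_subset)
  -- `x` is the only vertex of `G.fillNbhd A D` on the fill path `u, x, d, …, w`.
  obtain ⟨v, hv, hvY⟩ :=
    (hY.fill hYA).2.2 (.cons (fill_adj_of_mem_fillNbhd_farComp hx) (.cons hxd q))
  simp only [Walk.support_cons, List.mem_cons] at hv
  obtain rfl | rfl | hv := hv
  · exact absurd (hYN hvY) not_mem_fillNbhd_farComp_self
  · exact_mod_cast hvY
  · exact absurd (hYN hvY) fun h => (mem_fillNbhd.1 h).2.1 (hq v hv)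

theorem isClique_fill_sdiff_farComp [DecidableEq α] (hw : w ∈ G.farFrom A u) :
    (G.fill (A \ G.farComp A u w)).IsClique (G.fillNbhd A (G.farComp A u w)) := by
  set D := G.farComp A u w
  have hsub : A \ D ⊆ A := Finset.sdiff_subset
  have hwD : w ∉ A \ D := fun h => (Finset.mem_sdiff.1 h).2 (self_mem_farComp hw)
  refine isClique_fill_of_subset_regionBoundary hwD fun x hx => ?_
  obtain ⟨hxA, hxD, d, hd, hxd⟩ := mem_fillNbhd.1 hx
  have hdD : d ∉ A \ D := fun h => (Finset.mem_sdiff.1 h).2 hd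
  have hwd : G.ReachIn (↑(A \ D))ᶜ w d := (reachIn_farComp hd).lift fun y z hyz hy hz =>
    reachIn_of_fill_adj hsub hyz.symm (fun h => (Finset.mem_sdiff.1 h).2 hz)
      (fun h => (Finset.mem_sdiff.1 h).2 hy)
  rw [regionBoundary_congr hwd]
  exact mem_regionBoundary_of_fill_adj hsub hxd (Finset.mem_sdiff.2 ⟨hxA, hxD⟩) hdD

theorem isClique_fill_farComp_union_fillNbhd [DecidableEq α] :
    (G.fill (G.farComp A u w ∪ G.fillNbhd A (G.farComp A u w))).IsClique
      (G.fillNbhd A (G.farComp A u w)) := by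
  have hsub : G.farComp A u w ∪ G.fillNbhd A (G.farComp A u w) ⊆ A :=
    Finset.union_subset farComp_subset fillNbhd_subset
  have hu : u ∉ G.farComp A u w ∪ G.fillNbhd A (G.farComp A u w) := by
    simp [not_mem_farComp_self, not_mem_fillNbhd_farComp_self]
  exact isClique_fill_of_subset_regionBoundary hu fun x hx => mem_regionBoundary_of_fill_adj
    hsub (fill_adj_of_mem_fillNbhd_farComp hx).symm (Finset.mem_union_right _ hx) hu

theorem BoundariesAtMost.sdiff [DecidableEq α] {k : ℕ} (h : G.BoundariesAtMost A k)
    (hN : (G.fillNbhd A D).card ≤ k) : G.BoundariesAtMost (A \ D) k :=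
  h.of_subset Finset.sdiff_subset hN fun x hx y hyA hy hxy => by
    simp only [Finset.mem_sdiff, not_and, not_not] at hx hy
    exact mem_fillNbhd.2 ⟨hx.1, hx.2, y, hy hyA, hxy⟩

theorem BoundariesAtMost.union_fillNbhd [DecidableEq α] {k : ℕ} (h : G.BoundariesAtMost A k)
    (hD : D ⊆ A) (hN : (G.fillNbhd A D).card ≤ k) :
    G.BoundariesAtMost (D ∪ G.fillNbhd A D) k :=
  h.of_subset (Finset.union_subset hD fillNbhd_subset) hN fun x hx y hyA hy hxy => by
    simp only [Finset.mem_union, not_or] at hx hy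
    refine hx.resolve_left fun hxD => hy.2 (mem_fillNbhd.2 ⟨hyA, hy.1, x, hxD, hxy.symm⟩)

theorem subset_sdiff_or_subset_union_fillNbhd [DecidableEq α] (hKA : K ⊆ A)
    (hK : (G.fill A).IsClique K) : K ⊆ A \ D ∨ K ⊆ D ∪ G.fillNbhd A D := by
  by_cases hKD : ∃ d ∈ K, d ∈ D
  · obtain ⟨d, hdK, hdD⟩ := hKD
    refine .inr fun x hxK => ?_
    by_cases hxD : x ∈ D
    · exact Finset.mem_union_left _ hxD
    · exact Finset.mem_union_right _ (mem_fillNbhd.2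
        ⟨hKA hxK, hxD, d, hdD, hK hxK hdK fun h => hxD (h ▸ hdD)⟩)
  · push Not at hKD
    exact .inl fun x hxK => Finset.mem_sdiff.2 ⟨hKA hxK, hKD x hxK⟩

theorem sdiff_inter_union_fillNbhd [DecidableEq α] :
    (A \ D) ∩ (D ∪ G.fillNbhd A D) = G.fillNbhd A D := by
  ext x
  have := @mem_fillNbhd _ G A D x
  simp only [Finset.mem_inter, Finset.mem_sdiff, Finset.mem_union]
  tauto

theorem sdiff_union_union_fillNbhd [DecidableEq α] (hD : D ⊆ A) :
    (A \ D) ∪ (D ∪ G.fillNbhd A D) = A := by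
  ext x
  have := @mem_fillNbhd _ G A D x
  have := @hD x
  simp only [Finset.mem_union, Finset.mem_sdiff]
  tauto

end Split

section TreeDecomp

variable {ι ι₁ ι₂ : Type} {T₁ : SimpleGraph ι₁} {T₂ : SimpleGraph ι₂}

theorem IsTree.sum_sup_edge [Finite ι₁] [Finite ι₂] (h₁ : T₁.IsTree) (h₂ : T₂.IsTree)
    (i₁ : ι₁) (i₂ : ι₂) : (T₁.sum T₂ ⊔ edge (.inl i₁) (.inr i₂)).IsTree := by
  classical
  have := Fintype.ofFinite ι₁
  have := Fintype.ofFinite ι₂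
  rw [isTree_iff_connected_and_card] at h₁ h₂ ⊢
  refine ⟨h₁.1.sum_sup_edge h₂.1, ?_⟩
  rw [Nat.card_eq_fintype_card, ← edgeFinset_card, card_edgeFinset_sup_edge _ (by simp) (by simp),
    edgeFinset_card, ← Nat.card_eq_fintype_card, Nat.card_congr edgeSetSumEquiv, Nat.card_sum,
    Nat.card_sum]
  omega

/-- The conditions of `IsTreeDecomp` for the vertex set `X`, without the edge condition. -/
structure IsTreeDecompOn (T : SimpleGraph ι) (B : ι → Finset α) (X : Finset α) : Prop where
  isTree : T.IsTree
  bag_subset : ∀ i, B i ⊆ X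
  exists_mem_bag : ∀ v ∈ X, ∃ i, v ∈ B i
  mem_bag_of_isPath : ∀ (v : α) (i j : ι), v ∈ B i → v ∈ B j →
    ∀ p : T.Walk i j, p.IsPath → ∀ x ∈ p.support, v ∈ B x

variable {B₁ : ι₁ → Finset α} {B₂ : ι₂ → Finset α} {X₁ X₂ : Finset α} {i₁ : ι₁} {i₂ : ι₂}

theorem IsTreeDecompOn.exists_isPath {T : SimpleGraph ι} {B : ι → Finset α} {X : Finset α}
    (h : IsTreeDecompOn T B X) {v : α} {i j : ι} (hi : v ∈ B i) (hj : v ∈ B j) :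
    ∃ p : T.Walk i j, p.IsPath ∧ ∀ x ∈ p.support, v ∈ B x := by
  obtain ⟨p, hp, -⟩ := h.isTree.existsUnique_path i j
  exact ⟨p, hp, h.mem_bag_of_isPath v i j hi hj p hp⟩

/-- The path from `a` to `b` runs through `i₁` and `i₂`, whose bags contain `X₁ ∩ X₂ ∋ v`. -/
theorem IsTreeDecompOn.exists_isPath_inl_inr [DecidableEq α] (h₁ : IsTreeDecompOn T₁ B₁ X₁)
    (h₂ : IsTreeDecompOn T₂ B₂ X₂) (hi₁ : X₁ ∩ X₂ ⊆ B₁ i₁) (hi₂ : X₁ ∩ X₂ ⊆ B₂ i₂) {v : α}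
    {a : ι₁} {b : ι₂} (ha : v ∈ B₁ a) (hb : v ∈ B₂ b) :
    ∃ p : (T₁.sum T₂ ⊔ edge (.inl i₁) (.inr i₂)).Walk (.inl a) (.inr b),
      p.IsPath ∧ ∀ x ∈ p.support, v ∈ Sum.elim B₁ B₂ x := by
  set T := T₁.sum T₂ ⊔ edge (.inl i₁) (.inr i₂)
  let φ₁ : T₁ →g T := ⟨Sum.inl, fun h => Or.inl h⟩
  let φ₂ : T₂ →g T := ⟨Sum.inr, fun h => Or.inl h⟩
  have hbridge : T.Adj (φ₁ i₁) (φ₂ i₂) := Or.inr (by simp [edge_adj, φ₁, φ₂])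
  have hv : v ∈ X₁ ∩ X₂ := Finset.mem_inter.2 ⟨h₁.bag_subset a ha, h₂.bag_subset b hb⟩
  obtain ⟨q₁, hq₁, hq₁v⟩ := h₁.exists_isPath ha (hi₁ hv)
  obtain ⟨q₂, hq₂, hq₂v⟩ := h₂.exists_isPath (hi₂ hv) hb
  let p : T.Walk (φ₁ a) (φ₂ b) := (q₁.map φ₁).append (.cons hbridge (q₂.map φ₂))
  have hp : p.IsPath := by
    refine Walk.IsPath.mk' ?_
    simp only [p, Walk.support_append, Walk.support_cons, List.tail_cons, Walk.support_map]
    refine List.nodup_append.2 ⟨hq₁.support_nodup.map Sum.inl_injective,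
      hq₂.support_nodup.map Sum.inr_injective, ?_⟩
    simp [φ₁, φ₂]
  have hpv : ∀ x ∈ p.support, v ∈ Sum.elim B₁ B₂ x := by
    simpa [p, φ₁, φ₂, or_imp, forall_and] using ⟨hq₁v, hi₁ hv, hq₂v⟩
  exact ⟨p, hp, hpv⟩

theorem IsTreeDecompOn.glue [Finite ι₁] [Finite ι₂] [DecidableEq α]
    (h₁ : IsTreeDecompOn T₁ B₁ X₁) (h₂ : IsTreeDecompOn T₂ B₂ X₂)
    (hi₁ : X₁ ∩ X₂ ⊆ B₁ i₁) (hi₂ : X₁ ∩ X₂ ⊆ B₂ i₂) :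
    IsTreeDecompOn (T₁.sum T₂ ⊔ edge (.inl i₁) (.inr i₂)) (Sum.elim B₁ B₂) (X₁ ∪ X₂) := by
  set T := T₁.sum T₂ ⊔ edge (.inl i₁) (.inr i₂)
  have hT : T.IsTree := h₁.isTree.sum_sup_edge h₂.isTree i₁ i₂
  refine ⟨hT, ?_, ?_, fun v i j hi hj p hp => ?_⟩
  · rintro (i | i)
    exacts [(h₁.bag_subset i).trans Finset.subset_union_left,
      (h₂.bag_subset i).trans Finset.subset_union_right]
  · intro v hv
    rcases Finset.mem_union.1 hv with hv | hv
    · obtain ⟨i, hi⟩ := h₁.exists_mem_bag v hv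
      exact ⟨.inl i, hi⟩
    · obtain ⟨i, hi⟩ := h₂.exists_mem_bag v hv
      exact ⟨.inr i, hi⟩
  obtain ⟨P, hP, hPv⟩ : ∃ P : T.Walk i j, P.IsPath ∧ ∀ x ∈ P.support, v ∈ Sum.elim B₁ B₂ x := by
    rcases i with a | a <;> rcases j with b | b
    · obtain ⟨q, hq, hqv⟩ := h₁.exists_isPath hi hj
      let φ₁ : T₁ →g T := ⟨Sum.inl, fun h => Or.inl h⟩
      exact ⟨q.map φ₁, hq.map Sum.inl_injective, by simpa [φ₁] using hqv⟩
    · exact h₁.exists_isPath_inl_inr h₂ hi₁ hi₂ hi hj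
    · obtain ⟨P, hP, hPv⟩ := h₁.exists_isPath_inl_inr h₂ hi₁ hi₂ hj hi
      exact ⟨P.reverse, hP.reverse, by simpa using hPv⟩
    · obtain ⟨q, hq, hqv⟩ := h₂.exists_isPath hi hj
      let φ₂ : T₂ →g T := ⟨Sum.inr, fun h => Or.inl h⟩
      exact ⟨q.map φ₂, hq.map Sum.inr_injective, by simpa [φ₂] using hqv⟩
  rwa [(hT.existsUnique_path i j).unique hp hP]

/-- Asking every clique of `H` inside `A` to lie in a bag is what lets two such decompositions
be glued along a clique. -/
def HasDecompOn (H : SimpleGraph α) (A : Finset α) (N : ℕ) : Prop :=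
  ∃ (ι : Type) (_ : Finite ι) (T : SimpleGraph ι) (B : ι → Finset α),
    IsTreeDecompOn T B A ∧ (∀ i, (B i).card ≤ N) ∧ ∀ K ⊆ A, H.IsClique (K : Set α) → ∃ i, K ⊆ B i

variable {H H₁ H₂ : SimpleGraph α} {A A₁ A₂ : Finset α} {N : ℕ}

theorem HasDecompOn.of_card_le (hA : A.card ≤ N) : HasDecompOn H A N :=
  ⟨Unit, inferInstance, ⊥, fun _ => A, ⟨.of_subsingleton, fun _ => subset_rfl,
    fun _ hv => ⟨(), hv⟩, fun _ _ _ hv _ _ _ _ _ => hv⟩, fun _ => hA, fun _ hK _ => ⟨(), hK⟩⟩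

theorem HasDecompOn.glue [DecidableEq α] (h₁ : HasDecompOn H₁ A₁ N) (h₂ : HasDecompOn H₂ A₂ N)
    (hS₁ : H₁.IsClique ↑(A₁ ∩ A₂)) (hS₂ : H₂.IsClique ↑(A₁ ∩ A₂))
    (hK : ∀ K ⊆ A₁ ∪ A₂, H.IsClique (K : Set α) →
      K ⊆ A₁ ∧ H₁.IsClique (K : Set α) ∨ K ⊆ A₂ ∧ H₂.IsClique (K : Set α)) :
    HasDecompOn H (A₁ ∪ A₂) N := by
  obtain ⟨ι₁, _, T₁, B₁, hT₁, hB₁, hK₁⟩ := h₁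
  obtain ⟨ι₂, _, T₂, B₂, hT₂, hB₂, hK₂⟩ := h₂
  obtain ⟨i₁, hi₁⟩ := hK₁ _ Finset.inter_subset_left hS₁
  obtain ⟨i₂, hi₂⟩ := hK₂ _ Finset.inter_subset_right hS₂
  refine ⟨ι₁ ⊕ ι₂, inferInstance, _, _, hT₁.glue hT₂ hi₁ hi₂, Sum.rec hB₁ hB₂,
    fun K hKA hKH => ?_⟩
  rcases hK K hKA hKH with ⟨hKA₁, hK⟩ | ⟨hKA₂, hK⟩
  · obtain ⟨i, hi⟩ := hK₁ K hKA₁ hK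
    exact ⟨.inl i, hi⟩
  · obtain ⟨i, hi⟩ := hK₂ K hKA₂ hK
    exact ⟨.inr i, hi⟩

theorem treewidth_le_of_hasDecompOn [Fintype α] {G : SimpleGraph α}
    (h : HasDecompOn H Finset.univ N) (hGH : G ≤ H) : treewidth G ≤ N - 1 := by
  classical
  obtain ⟨ι, _, T, B, hT, hB, hK⟩ := h
  let e := Finite.equivFin ι
  let φ := Iso.map e T
  refine Nat.sInf_le ⟨Nat.card ι, T.map e.toEmbedding, B ∘ e.symm,
    ⟨φ.isTree_iff.1 hT.isTree, ?_, ?_, ?_⟩, fun i => (hB _).trans (by omega)⟩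
  · intro v
    obtain ⟨i, hi⟩ := hT.exists_mem_bag v (Finset.mem_univ v)
    exact ⟨e i, by simpa using hi⟩
  · intro a b hab
    obtain ⟨i, hi⟩ := hK {a, b} (Finset.subset_univ _)
      (by simpa using isClique_pair.2 fun _ => hGH hab)
    exact ⟨e i, by simpa using hi (by simp), by simpa using hi (by simp)⟩
  · intro v i j hi hj p hp x hx
    refine hT.mem_bag_of_isPath v (φ.symm i) (φ.symm j) hi hj (p.map φ.symm.toHom)
      (hp.map φ.symm.injective) (φ.symm x) ?_
    rw [Walk.support_map]
    exact List.mem_map_of_mem hx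

end TreeDecomp

theorem hasDecompOn_fill [Finite α] [DecidableEq α] {k s : ℕ} (hs : 1 ≤ s)
    (hclique : G.CliqueFree k) (hsep : ¬∃ X : Set α, MinSeparator G X ∧ s < X.ncard)
    (A : Finset α) (hA : G.BoundariesAtMost A s) :
    HasDecompOn (G.fill A) A ((k - 1) * s ^ 3) := by
  induction A using Finset.strongInduction with
  | H A ih =>
  by_cases hAcl : (G.fill A).IsClique (A : Set α)
  · exact .of_card_le (card_le_of_isClique_fill hs hclique hsep hA hAcl)
  obtain ⟨u, hu, w, hwA, huw, huw'⟩ : ∃ u ∈ A, ∃ w ∈ A, u ≠ w ∧ ¬(G.fill A).Adj u w := by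
    simpa [IsClique, Set.Pairwise] using hAcl
  have hw : w ∈ G.farFrom A u := mem_farFrom.2 ⟨hwA, huw.symm, huw'⟩
  set D := G.farComp A u w
  have hD : D ⊆ A := farComp_subset
  have hN := card_fillNbhd_farComp_le hsep hu hw
  have h₁ := ih (A \ D) (Finset.sdiff_ssubset hD ⟨w, self_mem_farComp hw⟩) (hA.sdiff hN)
  have h₂ := ih (D ∪ G.fillNbhd A D)
    (Finset.ssubset_iff_subset_ne.2 ⟨Finset.union_subset hD fillNbhd_subset, fun h => by
      rw [← h] at hu
      simp [D, not_mem_farComp_self, not_mem_fillNbhd_farComp_self] at hu⟩)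
    (hA.union_fillNbhd hD hN)
  have key := HasDecompOn.glue (H := G.fill A) h₁ h₂
    (by rw [sdiff_inter_union_fillNbhd]; exact isClique_fill_sdiff_farComp hw)
    (by rw [sdiff_inter_union_fillNbhd]; exact isClique_fill_farComp_union_fillNbhd)
    fun K hKA hK => by
      rw [sdiff_union_union_fillNbhd hD] at hKA
      refine (subset_sdiff_or_subset_union_fillNbhd hKA hK).imp (fun h => ⟨h, ?_⟩) fun h => ⟨h, ?_⟩
      exacts [hK.fill_of_subset Finset.sdiff_subset h,
        hK.fill_of_subset (Finset.union_subset hD fillNbhd_subset) h]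
  rwa [sdiff_union_union_fillNbhd hD] at key

end SimpleGraph

theorem statement0_general (G : SimpleGraph V) (k s : ℕ) (hs : 1 ≤ s)
    (hclique : G.CliqueFree k)
    (hsep : ¬∃ X : Set V, MinSeparator G X ∧ s < X.ncard) :
    treewidth G ≤ (k - 1) * s ^ 3 - 1 :=
  treewidth_le_of_hasDecompOn
    (hasDecompOn_fill hs hclique hsep Finset.univ fun r hr => absurd (Finset.mem_univ r) hr)
    le_fill_univ

/-- If `G` has no clique on `k` vertices (`k ≥ 2`) and no minimal separator
of size larger than `s` (`s ≥ 1`), then the treewidth of `G` is at most `(k-1)·s³ - 1`. -/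
theorem statement0 (G : SimpleGraph V) (k s : ℕ) (hk : 2 ≤ k) (hs : 1 ≤ s)
    (hclique : G.CliqueFree k)
    (hsep : ¬∃ X : Set V, MinSeparator G X ∧ s < X.ncard) :
    treewidth G ≤ (k - 1) * s ^ 3 - 1 :=
  statement0_general G k s hs hclique hsep
end

section
/- Let G be a graph, let k ≥ 2 and s ≥ 1 be integers, and let Ω be a potential maximal clique in G with |Ω| > (k−1)·s^3. Then G contains either a clique of size k or a minimal separator of size larger than s. -/
open SimpleGraph

variable {V : Type} [Fintype V] [DecidableEq V]

/-!
Let `H` be a minimal chordal completion of `G` in which `Ω` is a maximal clique. If `S` is a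
clique of `H`, deleting from `H` the edges between distinct components of `G - S` keeps `H`
chordal, because a hole minus a clique is connected; by minimality `H` has no such edges. Hence
any two vertices of `Ω` are joined by a path of `G` whose inner vertices avoid `Ω`. In a chordal
graph a connected set dominating a clique contains a vertex complete to it, so by maximality of
`Ω` no component of `G - Ω` is full to `Ω`; it follows that the neighbourhood of every component
of `G - Ω` is a minimal separator of `G`.

If `Ω` is a clique of `G` it contains a `k`-clique. Otherwise assume all minimal separators have
at most `s` vertices and take non-adjacent `x, y ∈ Ω` and a minimal `xy`-separator `X`. A path
from `x` to `y` through `G - Ω` enters a component whose neighbourhood contains `x` and `y`, so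
`s ≥ 2`. Every `z ∈ Ω` outside `X ∪ {x, y}` lies on such a path from `x` to `y`, which meets `X`
in some `t ∉ Ω`; then `z` is in the neighbourhood of the component of `t`. Hence
`|Ω| ≤ 2 + s + s * s ≤ s ^ 3`, contradicting `|Ω| > (k - 1) * s ^ 3`.
-/

section

omit [Fintype V] [DecidableEq V]

variable {G H K : SimpleGraph V} {Ω : Set V}

lemma ZMod.natCast_ne_zero_of_pos_of_lt {n k : ℕ} (h0 : 0 < k) (hk : k < n) :
    (k : ZMod n) ≠ 0 := by
  rw [Ne, ZMod.natCast_eq_zero_iff]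
  exact Nat.not_dvd_of_pos_of_lt h0 hk

lemma ZMod.eq_add_one_iff_val_eq {n : ℕ} [NeZero n] {a b : ZMod n} :
    b = a + 1 ↔ b.val = (a.val + 1) % n := by
  rw [← (ZMod.val_injective n).eq_iff, ZMod.val_add, ZMod.val_one_eq_one_mod, Nat.add_mod_mod]

lemma Nat.add_one_mod_of_lt {a n : ℕ} (h : a < n) :
    ((a + 1) % n = a + 1 ∧ a + 1 < n) ∨ ((a + 1) % n = 0 ∧ a + 1 = n) := by
  by_cases h' : a + 1 < n
  · exact Or.inl ⟨Nat.mod_eq_of_lt h', h'⟩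
  · have h' : a + 1 = n := by omega
    exact Or.inr ⟨by rw [h', Nat.mod_self], h'⟩

lemma isHoleEmb_of_nat {n : ℕ} (hn : 4 ≤ n) {g : ℕ → V} (hinj : Set.InjOn g (Set.Iio n))
    (hadj : ∀ i j, i < j → j < n → (K.Adj (g i) (g j) ↔ j = i + 1 ∨ (i = 0 ∧ j = n - 1))) :
    IsHoleEmb K n (fun m => g m.val) := by
  have : NeZero n := ⟨by omega⟩
  refine ⟨hn, fun i j h => ZMod.val_injective n (hinj (ZMod.val_lt i) (ZMod.val_lt j) h),
    fun i j => ?_⟩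
  simp only [ZMod.eq_add_one_iff_val_eq]
  have hi := Nat.add_one_mod_of_lt (ZMod.val_lt i)
  have hj := Nat.add_one_mod_of_lt (ZMod.val_lt j)
  rcases lt_trichotomy i.val j.val with h | h | h
  · rw [hadj _ _ h (ZMod.val_lt j)]
    omega
  · simp only [h, SimpleGraph.irrefl, false_iff]
    omega
  · rw [K.adj_comm, hadj _ _ h (ZMod.val_lt i)]
    omega

section Cycle

variable {a b : V} (x : V) (q : K.Walk a b) (y : V)

def cycleThrough : ℕ → V := fun k =>
  if k = 0 then x else if k ≤ q.length + 1 then q.getVert (k - 1) else y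

lemma cycleThrough_zero : cycleThrough x q y 0 = x := rfl

lemma cycleThrough_of_le {k : ℕ} (h1 : 1 ≤ k) (h2 : k ≤ q.length + 1) :
    cycleThrough x q y k = q.getVert (k - 1) := by
  simp only [cycleThrough, if_neg (show k ≠ 0 by omega), if_pos h2]

lemma cycleThrough_length_add_two : cycleThrough x q y (q.length + 2) = y := by
  simp only [cycleThrough, if_neg (show q.length + 2 ≠ 0 by omega),
    if_neg (show ¬q.length + 2 ≤ q.length + 1 by omega)]

variable {x q y}

lemma injOn_cycleThrough (hinj : Set.InjOn q.getVert (Set.Iic q.length)) (hx : x ∉ q.support)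
    (hy : y ∉ q.support) (hxy : x ≠ y) :
    Set.InjOn (cycleThrough x q y) (Set.Iio (q.length + 3)) := by
  have hxq : ∀ k, q.getVert k ≠ x := fun k h => hx (h ▸ q.getVert_mem_support k)
  have hyq : ∀ k, q.getVert k ≠ y := fun k h => hy (h ▸ q.getVert_mem_support k)
  have region : ∀ k < q.length + 3, k = 0 ∨ (1 ≤ k ∧ k ≤ q.length + 1) ∨ k = q.length + 2 := by
    omega
  intro i hi j hj hij
  rcases region i hi with rfl | ⟨hi1, hi2⟩ | rfl <;>
    rcases region j hj with rfl | ⟨hj1, hj2⟩ | rfl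
  · rfl
  · exact (hxq _ (cycleThrough_of_le x q y hj1 hj2 ▸ hij).symm).elim
  · exact (hxy (cycleThrough_length_add_two x q y ▸ hij)).elim
  · exact (hxq _ (cycleThrough_of_le x q y hi1 hi2 ▸ hij)).elim
  · rw [cycleThrough_of_le x q y hi1 hi2, cycleThrough_of_le x q y hj1 hj2] at hij
    have := hinj (by simp only [Set.mem_Iic]; omega) (by simp only [Set.mem_Iic]; omega) hij
    omega
  · exact (hyq _ (cycleThrough_of_le x q y hi1 hi2 ▸ cycleThrough_length_add_two x q y ▸ hij)).elim
  · exact (hxy (cycleThrough_length_add_two x q y ▸ hij).symm).elim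
  · exact (hyq _
      (cycleThrough_of_le x q y hj1 hj2 ▸ cycleThrough_length_add_two x q y ▸ hij).symm).elim
  · rfl

lemma adj_cycleThrough_iff
    (hchord : ∀ i j, i + 1 < j → j ≤ q.length → ¬K.Adj (q.getVert i) (q.getVert j))
    (hxy : K.Adj x y) (hxa : K.Adj x a) (hyb : K.Adj y b)
    (hx : ∀ j, 1 ≤ j → j ≤ q.length → ¬K.Adj x (q.getVert j))
    (hy : ∀ j < q.length, ¬K.Adj y (q.getVert j)) {i j : ℕ} (hij : i < j)
    (hj : j < q.length + 3) :
    K.Adj (cycleThrough x q y i) (cycleThrough x q y j) ↔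
      j = i + 1 ∨ (i = 0 ∧ j = q.length + 3 - 1) := by
  have region : ∀ k < q.length + 3, k = 0 ∨ (1 ≤ k ∧ k ≤ q.length + 1) ∨ k = q.length + 2 := by
    omega
  rcases region i (by omega) with rfl | ⟨hi1, hi2⟩ | rfl <;>
    rcases region j hj with rfl | ⟨hj1, hj2⟩ | rfl
  all_goals try omega
  · rw [cycleThrough_zero, cycleThrough_of_le x q y hj1 hj2]
    constructor
    · intro h
      by_contra hne
      exact hx (j - 1) (by omega) (by omega) h
    · intro h
      rw [show j - 1 = 0 by omega, Walk.getVert_zero]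
      exact hxa
  · rw [cycleThrough_zero, cycleThrough_length_add_two]
    exact iff_of_true hxy (Or.inr ⟨rfl, by omega⟩)
  · rw [cycleThrough_of_le x q y hi1 hi2, cycleThrough_of_le x q y hj1 hj2]
    constructor
    · intro h
      by_contra hne
      exact hchord (i - 1) (j - 1) (by omega) (by omega) h
    · intro h
      rw [show j - 1 = i - 1 + 1 by omega]
      exact q.adj_getVert_succ (by omega)
  · rw [cycleThrough_of_le x q y hi1 hi2, cycleThrough_length_add_two]
    constructor
    · intro h
      by_contra hne
      exact hy (i - 1) (by omega) h.symm
    · intro h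
      rw [show i - 1 = q.length by omega, Walk.getVert_length]
      exact hyb.symm

lemma not_isChordal_of_chordless (hlen : 1 ≤ q.length)
    (hinj : Set.InjOn q.getVert (Set.Iic q.length))
    (hchord : ∀ i j, i + 1 < j → j ≤ q.length → ¬K.Adj (q.getVert i) (q.getVert j))
    (hxq : x ∉ q.support) (hyq : y ∉ q.support) (hxy : K.Adj x y) (hxa : K.Adj x a)
    (hyb : K.Adj y b) (hx : ∀ j, 1 ≤ j → j ≤ q.length → ¬K.Adj x (q.getVert j))
    (hy : ∀ j < q.length, ¬K.Adj y (q.getVert j)) : ¬IsChordal K := fun hK =>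
  hK ⟨_, _, isHoleEmb_of_nat (by omega) (injOn_cycleThrough hinj hxq hyq hxy.ne)
    fun _ _ hij hj => adj_cycleThrough_iff hchord hxy hxa hyb hx hy hij hj⟩

end Cycle

namespace IsHoleEmb

variable {n : ℕ} {f : ZMod n → V} {S : Set V}

lemma natCast_ne_zero (hf : IsHoleEmb K n f) {k : ℕ} (h0 : 0 < k) (hk : k < 4) :
    (k : ZMod n) ≠ 0 :=
  ZMod.natCast_ne_zero_of_pos_of_lt h0 (by have := hf.1; omega)

lemma eq_add_one_or_eq_add_one_of_isClique (hf : IsHoleEmb K n f) (hS : K.IsClique S)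
    {i j : ZMod n} (hi : f i ∈ S) (hj : f j ∈ S) (hij : i ≠ j) : j = i + 1 ∨ i = j + 1 :=
  (hf.2.2 i j).1 (hS hi hj fun h => hij (hf.2.1 h))

lemma exists_mem_clique_imp_eq_or_eq_add_one (hf : IsHoleEmb K n f) (hS : K.IsClique S) :
    ∃ τ, ∀ i, f i ∈ S → i = τ ∨ i = τ + 1 := by
  have h1 := hf.natCast_ne_zero (k := 1) one_pos (by norm_num)
  have h2 := hf.natCast_ne_zero (k := 2) two_pos (by norm_num)
  have h3 := hf.natCast_ne_zero (k := 3) three_pos (by norm_num)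
  push_cast at h1 h2 h3
  by_cases hσ : ∃ σ, f σ ∈ S
  swap
  · exact ⟨0, fun i hi => (hσ ⟨i, hi⟩).elim⟩
  obtain ⟨σ, hσ⟩ := hσ
  by_cases hσ1 : f (σ + 1) ∈ S
  · refine ⟨σ, fun i hi => ?_⟩
    by_contra! hne
    rcases hf.eq_add_one_or_eq_add_one_of_isClique hS hσ hi hne.1.symm with h | h
    · exact hne.2 h
    have hne' : σ + 1 ≠ i := fun h' => h2 (by linear_combination h' - h)
    rcases hf.eq_add_one_or_eq_add_one_of_isClique hS hσ1 hi hne' with h' | h'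
    · exact h3 (by linear_combination -h - h')
    · exact hne.1 (by linear_combination -h')
  · refine ⟨σ - 1, fun i hi => ?_⟩
    by_cases hiσ : i = σ
    · exact Or.inr (by rw [hiσ]; ring)
    rcases hf.eq_add_one_or_eq_add_one_of_isClique hS hσ hi (Ne.symm hiσ) with h | h
    · exact (hσ1 (h ▸ hi)).elim
    · exact Or.inl (by linear_combination -h)

/-- A hole minus a clique is connected. -/
lemma iff_of_notMem_of_isClique (hf : IsHoleEmb K n f) (hS : K.IsClique S)
    (Q : V → Prop) (hQ : ∀ u w, K.Adj u w → u ∉ S → w ∉ S → (Q u ↔ Q w)) {i j : ZMod n}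
    (hi : f i ∉ S) (hj : f j ∉ S) : Q (f i) ↔ Q (f j) := by
  obtain ⟨τ, hτ⟩ := hf.exists_mem_clique_imp_eq_or_eq_add_one hS
  have h1 := hf.natCast_ne_zero (k := 1) one_pos (by norm_num)
  have h2 := hf.natCast_ne_zero (k := 2) two_pos (by norm_num)
  push_cast at h1 h2
  have hstep : ∀ a : ZMod n, K.Adj (f a) (f (a + 1)) := fun a => (hf.2.2 a (a + 1)).2 (Or.inl rfl)
  have hτ2 : f (τ + 2) ∉ S := fun h => by
    rcases hτ _ h with h' | h'
    · exact h2 (by linear_combination h')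
    · exact h1 (by linear_combination h')
  have hrun : ∀ l : ℕ, f (τ + 2 + l) ∈ S ∨ (Q (f (τ + 2 + l)) ↔ Q (f (τ + 2))) := by
    intro l
    induction l with
    | zero => simp
    | succ l ih =>
      have hsucc : τ + 2 + ((l + 1 : ℕ) : ZMod n) = τ + 2 + l + 1 := by push_cast; ring
      rw [hsucc]
      by_cases hS1 : f (τ + 2 + l + 1) ∈ S
      · exact Or.inl hS1
      refine Or.inr ?_
      by_cases hS0 : f (τ + 2 + l) ∈ S
      · rcases hτ _ hS0 with h | h
        · rw [h] at hS1 ⊢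
          refine hQ _ _ ?_ hS1 hτ2
          simpa only [add_assoc, one_add_one_eq_two] using hstep (τ + 1)
        · rw [h, show τ + 1 + 1 = τ + 2 by ring]
      · exact (hQ _ _ (hstep _) hS0 hS1).symm.trans (ih.resolve_left hS0)
  have hbase : ∀ i, f i ∉ S → (Q (f i) ↔ Q (f (τ + 2))) := by
    intro i hi
    have : NeZero n := ⟨by have := hf.1; omega⟩
    have hi' : i = τ + 2 + ((i - (τ + 2)).val : ZMod n) := by
      rw [ZMod.natCast_zmod_val]; ring
    rw [hi'] at hi ⊢
    exact (hrun _).resolve_left hi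
  exact (hbase i hi).trans (hbase j hj).symm

end IsHoleEmb

def SimpleGraph.dropCrossEdges (K : SimpleGraph V) (S : Set V) (Q : V → Prop) :
    SimpleGraph V where
  Adj u w := K.Adj u w ∧ (u ∈ S ∨ w ∈ S ∨ (Q u ↔ Q w))
  symm := ⟨fun _ _ ⟨h, h'⟩ => ⟨h.symm, by tauto⟩⟩
  loopless := ⟨fun u h => K.irrefl h.1⟩

@[simp]
lemma SimpleGraph.dropCrossEdges_adj {S : Set V} {Q : V → Prop} {u w : V} :
    (K.dropCrossEdges S Q).Adj u w ↔ K.Adj u w ∧ (u ∈ S ∨ w ∈ S ∨ (Q u ↔ Q w)) :=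
  Iff.rfl

lemma IsChordal.dropCrossEdges (hK : IsChordal K) {S : Set V} (hS : K.IsClique S)
    (Q : V → Prop) : IsChordal (K.dropCrossEdges S Q) := by
  rintro ⟨n, f, hf⟩
  have hS' : (K.dropCrossEdges S Q).IsClique S := fun u hu w hw huw =>
    dropCrossEdges_adj.2 ⟨hS hu hw huw, Or.inl hu⟩
  refine hK ⟨n, f, hf.1, hf.2.1, fun i j =>
    ⟨fun h => (hf.2.2 i j).1 (dropCrossEdges_adj.2 ⟨h, ?_⟩),
      fun h => (dropCrossEdges_adj.1 ((hf.2.2 i j).2 h)).1⟩⟩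
  by_cases hi : f i ∈ S
  · exact Or.inl hi
  by_cases hj : f j ∈ S
  · exact Or.inr (Or.inl hj)
  exact Or.inr (Or.inr (hf.iff_of_notMem_of_isClique hS' Q
    (fun u w h hu hw => ((dropCrossEdges_adj.1 h).2.resolve_left hu).resolve_left hw) hi hj))

namespace SimpleGraph.Walk

variable {a b : V}

lemma injOn_getVert_of_forall_length_le (p : K.Walk a b)
    (hp : ∀ q : K.Walk a b, q.support ⊆ p.support → p.length ≤ q.length) :
    Set.InjOn p.getVert (Set.Iic p.length) := by
  suffices h : ∀ i j, i < j → j ≤ p.length → p.getVert i ≠ p.getVert j by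
    intro i hi j hj hij
    simp only [Set.mem_Iic] at hi hj
    by_contra hne
    rcases Nat.lt_or_gt_of_ne hne with hlt | hlt
    · exact h i j hlt hj hij
    · exact h j i hlt hi hij.symm
  intro i j hij hj h
  have := hp ((p.take i).append ((p.drop j).copy h.symm rfl)) fun x hx => by
    rw [mem_support_append_iff, support_copy] at hx
    exact hx.elim (fun hx => (p.isSubwalk_take i).support_subset hx)
      (fun hx => (p.isSubwalk_drop j).support_subset hx)
  simp only [length_append, take_length, length_copy, drop_length] at this
  omega

lemma not_adj_getVert_of_forall_length_le (p : K.Walk a b)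
    (hp : ∀ q : K.Walk a b, q.support ⊆ p.support → p.length ≤ q.length) {i j : ℕ}
    (hij : i + 1 < j) (hj : j ≤ p.length) : ¬K.Adj (p.getVert i) (p.getVert j) := by
  intro h
  have := hp ((p.take i).append (cons h (p.drop j))) fun x hx => by
    rw [mem_support_append_iff, support_cons, List.mem_cons] at hx
    rcases hx with hx | rfl | hx
    · exact (p.isSubwalk_take i).support_subset hx
    · exact p.getVert_mem_support i
    · exact (p.isSubwalk_drop j).support_subset hx
  simp only [length_append, take_length, length_cons, drop_length] at this
  omega

end SimpleGraph.Walk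

lemma IsChordal.adj_of_chordless (hK : IsChordal K) {c t v w : V} (p : K.Walk c t)
    (hinj : Set.InjOn p.getVert (Set.Iic p.length))
    (hchord : ∀ i j, i + 1 < j → j ≤ p.length → ¬K.Adj (p.getVert i) (p.getVert j))
    (hv : v ∉ p.support) (hw : w ∉ p.support) (hvt : K.Adj v t)
    (hv' : ∀ j < p.length, ¬K.Adj v (p.getVert j)) (hwc : K.Adj w c) (hwv : K.Adj w v) :
    K.Adj w t := by
  classical
  by_contra hwt
  -- the last vertex of `p` seen by `w` starts a hole through `w` and `v`
  set i := Nat.findGreatest (fun i => K.Adj w (p.getVert i)) p.length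
  have hi : K.Adj w (p.getVert i) :=
    Nat.findGreatest_spec (P := fun i => K.Adj w (p.getVert i)) (Nat.zero_le _) (by simpa)
  have hilt : i < p.length := by
    refine lt_of_le_of_ne (Nat.findGreatest_le _) fun h => hwt ?_
    rwa [h, Walk.getVert_length] at hi
  have hdrop : (p.drop i).support ⊆ p.support := (p.isSubwalk_drop i).support_subset
  refine not_isChordal_of_chordless (q := p.drop i) (x := w) (y := v) ?_ ?_ ?_
    (fun h => hw (hdrop h)) (fun h => hv (hdrop h)) hwv hi hvt ?_ ?_ hK
  all_goals simp only [Walk.drop_length, Walk.drop_getVert]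
  · omega
  · intro j hj k hk hjk
    simp only [Set.mem_Iic] at hj hk
    rw [Walk.drop_getVert, Walk.drop_getVert] at hjk
    have := hinj (by simp only [Set.mem_Iic]; omega) (by simp only [Set.mem_Iic]; omega) hjk
    omega
  · intro j k hjk hk
    exact hchord _ _ (by omega) (by omega)
  · intro j hj1 hj2
    exact Nat.findGreatest_is_greatest (P := fun i => K.Adj w (p.getVert i)) (n := p.length)
      (k := i + j) (by omega) (by omega)
  · intro j hj
    exact hv' _ (by omega)

lemma IsChordal.exists_forall_adj_of_isClique [Finite V] (hK : IsChordal K) {D : Set V}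
    (hD : ∀ x ∈ D, ∀ y ∈ D, ∃ p : K.Walk x y, ∀ z ∈ p.support, z ∈ D) (hDne : D.Nonempty)
    (hΩ : K.IsClique Ω) (hΩD : Disjoint Ω D) (hdom : ∀ v ∈ Ω, ∃ u ∈ D, K.Adj v u) :
    ∃ c ∈ D, ∀ v ∈ Ω, K.Adj c v := by
  induction Ω, Ω.toFinite using Set.Finite.induction_on with
  | empty => exact hDne.imp fun c hc => ⟨hc, by simp⟩
  | @insert v Ω hvΩ _ ih =>
    obtain ⟨c₀, hc₀D, hc₀⟩ := ih (hΩ.subset (Set.subset_insert _ _))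
      (hΩD.mono_left (Set.subset_insert _ _)) fun w hw => hdom w (Set.mem_insert_of_mem _ hw)
    obtain ⟨t₀, ht₀D, hvt₀⟩ := hdom v (Set.mem_insert _ _)
    obtain ⟨p₀, hp₀⟩ := hD c₀ hc₀D t₀ ht₀D
    -- the end of a shortest walk in `D` from a vertex complete to `Ω` to a neighbour of `v`
    -- is complete to `insert v Ω`, by `adj_of_chordless`
    classical
    have hP : ∃ m, ∃ (c t : V) (p : K.Walk c t), p.length = m ∧ (∀ z ∈ p.support, z ∈ D) ∧
        (∀ w ∈ Ω, K.Adj c w) ∧ K.Adj v t := ⟨_, c₀, t₀, p₀, rfl, hp₀, hc₀, hvt₀⟩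
    obtain ⟨c, t, p, hlen, hpD, hc, hvt⟩ := Nat.find_spec hP
    have hmin : ∀ {t'} (q : K.Walk c t'), q.support ⊆ p.support → K.Adj v t' →
        p.length ≤ q.length := fun q hq ht' =>
      hlen ▸ Nat.find_min' hP ⟨c, _, q, rfl, fun z hz => hpD z (hq hz), hc, ht'⟩
    have hshort : ∀ q : K.Walk c t, q.support ⊆ p.support → p.length ≤ q.length :=
      fun q hq => hmin q hq hvt
    have hv' : ∀ j < p.length, ¬K.Adj v (p.getVert j) := by
      intro j hj h
      have := hmin (p.take j) (p.isSubwalk_take j).support_subset h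
      rw [Walk.take_length] at this
      omega
    have hnD : ∀ u ∈ insert v Ω, u ∉ p.support := fun u hu hup =>
      Set.disjoint_left.1 hΩD hu (hpD u hup)
    refine ⟨t, hpD t p.end_mem_support, ?_⟩
    rintro w (rfl | hw)
    · exact hvt.symm
    · refine (hK.adj_of_chordless p (p.injOn_getVert_of_forall_length_le hshort)
        (fun _ _ => p.not_adj_getVert_of_forall_length_le hshort) (hnD _ (Set.mem_insert _ _))
        (hnD _ (Set.mem_insert_of_mem _ hw)) hvt hv' (hc w hw).symm ?_).symm
      exact hΩ (Set.mem_insert_of_mem _ hw) (Set.mem_insert _ _) fun h => hvΩ (h ▸ hw)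

/-- The component of `G - S` containing `w` (empty if `w ∈ S`). -/
def avoidComp (G : SimpleGraph V) (S : Set V) (w : V) : Set V :=
  {u | ∃ p : G.Walk w u, ∀ x ∈ p.support, x ∉ S}

def avoidCompNbhd (G : SimpleGraph V) (S : Set V) (w : V) : Set V :=
  {v | v ∉ avoidComp G S w ∧ ∃ u ∈ avoidComp G S w, G.Adj u v}

namespace avoidComp

variable {S : Set V} {w u v : V}

lemma mem_self (hw : w ∉ S) : w ∈ avoidComp G S w :=
  ⟨.nil, by simpa using hw⟩

lemma notMem (hu : u ∈ avoidComp G S w) : u ∉ S :=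
  let ⟨p, hp⟩ := hu; hp u p.end_mem_support

lemma mem_of_adj (hu : u ∈ avoidComp G S w) (huv : G.Adj u v) (hv : v ∉ S) :
    v ∈ avoidComp G S w := by
  obtain ⟨p, hp⟩ := hu
  refine ⟨p.concat huv, fun x hx => ?_⟩
  simp only [Walk.support_concat, List.mem_append, List.mem_singleton] at hx
  rcases hx with hx | rfl
  · exact hp x hx
  · exact hv

lemma mem_of_mem_support {p : G.Walk w u} (hp : ∀ x ∈ p.support, x ∉ S) (hv : v ∈ p.support) :
    v ∈ avoidComp G S w := by
  classical
  exact ⟨p.takeUntil v hv, fun x hx => hp x (p.support_takeUntil_subset_support hv hx)⟩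

lemma nbhd_subset : avoidCompNbhd G S w ⊆ S := fun _ ⟨hv, _, hu, huv⟩ =>
  by_contra fun hvS => hv (mem_of_adj hu huv hvS)

lemma exists_mem_nbhd_of_walk {r z : V} (p : G.Walk r z) (hr : r ∈ avoidComp G S w)
    (hz : z ∉ avoidComp G S w) : ∃ v ∈ p.support, v ∈ avoidCompNbhd G S w := by
  induction p with
  | nil => exact (hz hr).elim
  | @cons a b _ h q ih =>
    by_cases hb : b ∈ avoidComp G S w
    · obtain ⟨t, ht, htN⟩ := ih hb hz
      exact ⟨t, by simp [ht], htN⟩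
    · exact ⟨b, by simp, hb, a, hr, h⟩

lemma mem_nbhd_of_walk {r z : V} (p : G.Walk r z) (hr : r ∈ avoidComp G S w) (hz : z ∈ S)
    (hp : ∀ x ∈ p.support, x ∈ S → x = z) : z ∈ avoidCompNbhd G S w := by
  obtain ⟨v, hv, hvN⟩ := exists_mem_nbhd_of_walk p hr fun h => notMem h hz
  rwa [← hp v hv (nbhd_subset hvN)]

lemma mem_nbhd_of_isPath {z a t : V} {p : G.Walk z a} (hp : p.IsPath)
    (hz : z ∈ S) (hpS : ∀ x ∈ p.support, x ∈ S → x = z ∨ x = a) (ht : t ∈ p.support)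
    (hta : t ≠ a) (htS : t ∉ S) : z ∈ avoidCompNbhd G S t := by
  classical
  refine mem_nbhd_of_walk (p.takeUntil t ht).reverse (mem_self htS) hz fun x hx hxS => ?_
  rw [Walk.support_reverse, List.mem_reverse] at hx
  exact (hpS x (p.support_takeUntil_subset_support ht hx) hxS).resolve_right
    fun h => Walk.endpoint_notMem_support_takeUntil hp ht hta.symm (h ▸ hx)

end avoidComp

lemma IsMinimalChordalCompletion.not_adj_of_isClique (hH : IsMinimalChordalCompletion G H)
    {S : Set V} (hS : H.IsClique S) {a u v : V}
    (hu : u ∈ avoidComp G S a) (hv : v ∉ avoidComp G S a) (hvS : v ∉ S) : ¬H.Adj u v := by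
  obtain ⟨hGH, hch, hmin⟩ := hH
  set Q : V → Prop := (· ∈ avoidComp G S a)
  have hG : G ≤ H.dropCrossEdges S Q := fun p q hpq => dropCrossEdges_adj.2 ⟨hGH hpq, by
    by_cases hp : p ∈ S
    · exact Or.inl hp
    by_cases hq : q ∈ S
    · exact Or.inr (Or.inl hq)
    exact Or.inr (Or.inr ⟨fun h => avoidComp.mem_of_adj h hpq hq,
      fun h => avoidComp.mem_of_adj h hpq.symm hp⟩)⟩
  have hH' := hmin _ hG (fun _ _ h => (dropCrossEdges_adj.1 h).1) (hch.dropCrossEdges hS Q)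
  intro huv
  rw [← hH', dropCrossEdges_adj] at huv
  rcases huv.2 with h | h | h
  · exact avoidComp.notMem hu h
  · exact hvS h
  · exact hv (h.1 hu)

lemma IsMinimalChordalCompletion.exists_isPath_of_isClique (hH : IsMinimalChordalCompletion G H)
    (hcl : H.IsClique Ω) {a b : V} (ha : a ∈ Ω) (hb : b ∈ Ω) (hab : a ≠ b) :
    ∃ p : G.Walk a b, p.IsPath ∧ ∀ x ∈ p.support, x ∈ Ω → x = a ∨ x = b := by
  set S := Ω \ {a, b}
  have hb' : b ∈ avoidComp G S a := by
    by_contra hb'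
    exact hH.not_adj_of_isClique (hcl.subset Set.sdiff_subset) (avoidComp.mem_self (by simp))
      hb' (by simp) (hcl ha hb hab)
  obtain ⟨p, hp⟩ := hb'
  classical
  refine ⟨p.bypass, p.bypass_isPath, fun x hx hxΩ => ?_⟩
  by_contra! h
  exact hp x (p.support_bypass_subset_support hx) ⟨hxΩ, by simp [h.1, h.2]⟩

lemma IsMinimalChordalCompletion.exists_mem_avoidCompNbhd_of_not_adj
    (hH : IsMinimalChordalCompletion G H) (hcl : H.IsClique Ω) {x y : V} (hx : x ∈ Ω)
    (hy : y ∈ Ω) (hxy : x ≠ y) (hnadj : ¬G.Adj x y) :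
    ∃ u ∉ Ω, x ∈ avoidCompNbhd G Ω u ∧ y ∈ avoidCompNbhd G Ω u := by
  obtain ⟨p, hp, hpΩ⟩ := hH.exists_isPath_of_isClique hcl hx hy hxy
  have hnil : ¬p.Nil := fun h => hxy h.eq
  have hxu : G.Adj x p.snd := p.adj_snd hnil
  have hux : p.snd ≠ x := hxu.ne.symm
  have huy : p.snd ≠ y := fun h => hnadj (h ▸ hxu)
  have hu : p.snd ∈ p.support := p.getVert_mem_support 1
  have huΩ : p.snd ∉ Ω := fun h => (hpΩ _ hu h).elim hux huy
  refine ⟨p.snd, huΩ, avoidComp.mem_nbhd_of_isPath hp hx hpΩ hu huy huΩ,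
    avoidComp.mem_nbhd_of_isPath hp.reverse hy (fun z hz hzΩ => ?_) (by simp) hux huΩ⟩
  exact (hpΩ z (by simpa using hz) hzΩ).symm

lemma IsMinimalChordalCompletion.subset_union_biUnion_avoidCompNbhd
    (hH : IsMinimalChordalCompletion G H) (hcl : H.IsClique Ω) {x y : V} (hx : x ∈ Ω)
    (hy : y ∈ Ω) {X : Set V} (hX : Separates G X x y) :
    Ω ⊆ {x, y} ∪ X ∪ ⋃ t ∈ X \ Ω, avoidCompNbhd G Ω t := by
  intro z hz
  by_cases hzxy : z = x ∨ z = y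
  · exact Or.inl (Or.inl hzxy)
  by_cases hzX : z ∈ X
  · exact Or.inl (Or.inr hzX)
  push Not at hzxy
  obtain ⟨p₁, hp₁, hp₁Ω⟩ := hH.exists_isPath_of_isClique hcl hx hz hzxy.1.symm
  obtain ⟨p₂, hp₂, hp₂Ω⟩ := hH.exists_isPath_of_isClique hcl hz hy hzxy.2
  obtain ⟨t, ht, htX⟩ := hX.2.2 (p₁.append p₂)
  have htx : t ≠ x := fun h => hX.1 (h ▸ htX)
  have hty : t ≠ y := fun h => hX.2.1 (h ▸ htX)
  have htz : t ≠ z := fun h => hzX (h ▸ htX)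
  rcases (Walk.mem_support_append_iff _ _).1 ht with ht | ht
  · have htΩ : t ∉ Ω := fun h => (hp₁Ω t ht h).elim htx htz
    refine Or.inr (Set.mem_biUnion (x := t) ⟨htX, htΩ⟩ ?_)
    exact avoidComp.mem_nbhd_of_isPath hp₁.reverse hz
      (fun w hw hwΩ => (hp₁Ω w (by simpa using hw) hwΩ).symm) (by simpa using ht) htx htΩ
  · have htΩ : t ∉ Ω := fun h => (hp₂Ω t ht h).elim htz hty
    exact Or.inr (Set.mem_biUnion (x := t) ⟨htX, htΩ⟩
      (avoidComp.mem_nbhd_of_isPath hp₂ hz hp₂Ω ht hty htΩ))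

open avoidComp in
lemma IsPMC.minSeparator_avoidCompNbhd [Finite V] (hΩ : IsPMC G Ω) {w : V} (hw : w ∉ Ω) :
    MinSeparator G (avoidCompNbhd G Ω w) := by
  obtain ⟨H, hH, hcl, hmax⟩ := hΩ
  -- a vertex of `avoidComp` seeing all of `Ω` would extend the maximal clique `Ω`
  obtain ⟨z, hzΩ, hzN⟩ : ∃ z ∈ Ω, z ∉ avoidCompNbhd G Ω w := by
    by_contra! hall
    have hconn : ∀ x ∈ avoidComp G Ω w, ∀ y ∈ avoidComp G Ω w,
        ∃ p : H.Walk x y, ∀ u ∈ p.support, u ∈ avoidComp G Ω w := by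
      rintro x ⟨px, hpx⟩ y ⟨py, hpy⟩
      refine ⟨(px.reverse.append py).mapLe hH.1, fun u hu => ?_⟩
      rw [Walk.support_mapLe_eq_support, Walk.mem_support_append_iff, Walk.support_reverse,
        List.mem_reverse] at hu
      exact hu.elim (mem_of_mem_support hpx) (mem_of_mem_support hpy)
    obtain ⟨c, hcC, hc⟩ := hH.2.1.exists_forall_adj_of_isClique hconn ⟨w, mem_self hw⟩ hcl
      (Set.disjoint_left.2 fun v hv hvC => notMem hvC hv)
      fun v hv => let ⟨_, u, hu, huv⟩ := hall v hv; ⟨u, hu, hH.1 huv.symm⟩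
    have := hmax (insert c Ω) (hcl.insert fun v hv _ => hc v hv) (Set.subset_insert _ _)
    exact notMem hcC (this ▸ Set.mem_insert c Ω)
  refine ⟨w, z, ⟨fun h => hw (nbhd_subset h), hzN,
    fun p => exists_mem_nbhd_of_walk p (mem_self hw) fun h => notMem h hzΩ⟩,
    fun Y hY hYsep => Set.Subset.antisymm hY fun v hv => ?_⟩
  by_contra hvY
  obtain ⟨q, -, hq⟩ :=
    hH.exists_isPath_of_isClique hcl (nbhd_subset hv) hzΩ fun h => hzN (h ▸ hv)
  obtain ⟨-, u, ⟨pu, hpu⟩, huv⟩ := hv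
  obtain ⟨x, hx, hxY⟩ := hYsep.2.2 (pu.append (.cons huv q))
  have hxΩ : x ∈ Ω := nbhd_subset (hY hxY)
  rw [Walk.mem_support_append_iff, Walk.support_cons, List.mem_cons] at hx
  rcases hx with hx | hx | hx
  · exact hpu x hx hxΩ
  · exact hpu u pu.end_mem_support (hx ▸ hxΩ)
  · rcases hq x hx hxΩ with h | h
    · exact hvY (h ▸ hxY)
    · exact hzN (hY (h ▸ hxY))

lemma Set.ncard_biUnion_le_ncard_mul {ι α : Type*} [Finite ι] {T : Set ι} {f : ι → Set α}
    {m : ℕ} (hf : ∀ i ∈ T, (f i).ncard ≤ m) : (⋃ i ∈ T, f i).ncard ≤ T.ncard * m := by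
  have := Fintype.ofFinite ι
  classical
  rw [show ⋃ i ∈ T, f i = ⋃ i ∈ T.toFinset, f i by simp, Set.ncard_eq_toFinset_card' T,
    ← smul_eq_mul]
  exact (T.toFinset.set_ncard_biUnion_le f).trans
    (Finset.sum_le_card_nsmul _ _ _ fun i hi => hf i (Set.mem_toFinset.1 hi))

lemma exists_minSeparator_of_not_adj [Finite V] {x y : V} (hxy : x ≠ y) (hnadj : ¬G.Adj x y) :
    ∃ X, Separates G X x y ∧ MinSeparator G X := by
  have hcompl : Separates G {x, y}ᶜ x y := by
    refine ⟨by simp, by simp, fun p => ?_⟩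
    cases p with
    | nil => exact (hxy rfl).elim
    | @cons _ v _ h q =>
      refine ⟨v, by simp, ?_⟩
      simp only [Set.mem_compl_iff, Set.mem_insert_iff, Set.mem_singleton_iff, not_or]
      exact ⟨h.ne.symm, fun hv => hnadj (hv ▸ h)⟩
  obtain ⟨X, -, hX⟩ := exists_minimal_le_of_wellFoundedLT (Separates G · x y) _ hcompl
  exact ⟨X, hX.prop, x, y, hX.prop, fun Y hYX hY => le_antisymm hYX (hX.2 hY hYX)⟩

lemma IsPMC.ncard_le_of_not_isClique [Finite V] (hΩ : IsPMC G Ω) (hΩG : ¬G.IsClique Ω) {s : ℕ}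
    (hsep : ∀ X, MinSeparator G X → X.ncard ≤ s) : 2 ≤ s ∧ Ω.ncard ≤ 2 + s + s * s := by
  have hN : ∀ u ∉ Ω, (avoidCompNbhd G Ω u).ncard ≤ s := fun u hu =>
    hsep _ (hΩ.minSeparator_avoidCompNbhd hu)
  obtain ⟨H, hH, hcl, -⟩ := hΩ
  obtain ⟨x, hx, y, hy, hxy, hnadj⟩ : ∃ x ∈ Ω, ∃ y ∈ Ω, x ≠ y ∧ ¬G.Adj x y := by
    simpa [SimpleGraph.IsClique, Set.Pairwise] using hΩG
  constructor
  · obtain ⟨u, hu, hxu, hyu⟩ := hH.exists_mem_avoidCompNbhd_of_not_adj hcl hx hy hxy hnadj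
    calc 2 = ({x, y} : Set V).ncard := (Set.ncard_pair hxy).symm
      _ ≤ (avoidCompNbhd G Ω u).ncard := Set.ncard_le_ncard (Set.pair_subset hxu hyu)
      _ ≤ s := hN u hu
  obtain ⟨X, hXsep, hXmin⟩ := exists_minSeparator_of_not_adj hxy hnadj
  have hX : X.ncard ≤ s := hsep X hXmin
  calc Ω.ncard ≤ ({x, y} ∪ X ∪ ⋃ t ∈ X \ Ω, avoidCompNbhd G Ω t).ncard :=
        Set.ncard_le_ncard (hH.subset_union_biUnion_avoidCompNbhd hcl hx hy hXsep)
    _ ≤ ({x, y} : Set V).ncard + X.ncard + (X \ Ω).ncard * s := by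
        refine (Set.ncard_union_le _ _).trans (add_le_add (Set.ncard_union_le _ _) ?_)
        exact Set.ncard_biUnion_le_ncard_mul fun t ht => hN t ht.2
    _ ≤ 2 + s + s * s := by
        gcongr
        · exact (Set.ncard_pair hxy).le
        · exact (Set.ncard_le_ncard Set.sdiff_subset).trans hX

end

/-- If `Ω` is a potential maximal clique of `G` with `|Ω| > (k-1)·s³`
(`k ≥ 2`, `s ≥ 1`), then `G` contains a clique of size `k` or a minimal separator of size
larger than `s`. -/
theorem statement1 (G : SimpleGraph V) (k s : ℕ) (hk : 2 ≤ k) (hs : 1 ≤ s)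
    (Ω : Set V) (hΩ : IsPMC G Ω) (hcard : (k - 1) * s ^ 3 < Ω.ncard) :
    (∃ S : Finset V, G.IsNClique k S) ∨ (∃ X : Set V, MinSeparator G X ∧ s < X.ncard) := by
  by_cases hclique : G.IsClique Ω
  · left
    have hk' : k ≤ Ω.ncard := by
      have : k - 1 ≤ (k - 1) * s ^ 3 := Nat.le_mul_of_pos_right _ (pow_pos hs 3)
      omega
    obtain ⟨S, hSΩ, hS⟩ := Set.exists_subset_card_eq hk'
    refine ⟨(Set.toFinite S).toFinset, ?_, ?_⟩
    · simpa using hclique.subset hSΩ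
    · rwa [← Set.ncard_eq_toFinset_card]
  · right
    by_contra! hsep
    obtain ⟨hs2, hΩs⟩ := hΩ.ncard_le_of_not_isClique hclique hsep
    have : s ^ 3 ≤ (k - 1) * s ^ 3 := Nat.le_mul_of_pos_left _ (by omega)
    nlinarith
end

section
/- Let G be a (theta, triangle)-free graph and let W = (H, {u, v}) be a 2-wheel in G with uv ∉ E(G) that is not a nested wheel. Then every u-sector of H contains at most one neighbor of v, and every v-sector of H contains at most one neighbor of u. -/
open SimpleGraph

variable {V : Type} [Fintype V] [DecidableEq V]

/-!
Normalise so that the `u`-sector is `f 0, …, f d`, and let `f M₁`, `f M₂` be the first and the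
last neighbour of `v` in it; triangle-freeness gives `M₁ + 2 ≤ M₂` and `d + 3 ≤ n`, and `u` has a
neighbour strictly outside the sector. If `v` has none, the wheel is nested. Otherwise there is a
theta. When `v` is adjacent to `f (d + 1)`, it is formed at `v` and `f d` by the paths through
`f (d + 1)`, through `f M₂, …, f (d - 1)`, and through `f M₁, …, f 0, u`; the case
`v ∼ f (n - 1)` is the mirror image. In the remaining case a closest pair of neighbours of `u`
and `v` on `f (d + 2), …, f (n - 2)` gives a third `v`–`u` path besides `u, f 0, …, f M₁, v` and
`v, f M₂, …, f d, u`, and no edge joins the interiors of the three.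
-/

theorem Nat.exists_nearest_pair {A B : ℕ → Prop} {a b : ℕ} (hab : a ≤ b) (ha : A a) (hb : B b) :
    ∃ p q, a ≤ p ∧ p ≤ q ∧ q ≤ b ∧ A p ∧ B q ∧
      (∀ k, p < k → k ≤ q → ¬A k) ∧ ∀ k, p ≤ k → k < q → ¬B k := by
  classical
  set p := Nat.findGreatest A b
  have hap : a ≤ p := Nat.le_findGreatest hab ha
  have hq : ∃ q, p ≤ q ∧ B q := ⟨b, Nat.findGreatest_le b, hb⟩
  obtain ⟨hpq, hBq⟩ := Nat.find_spec hq
  have hqb : Nat.find hq ≤ b := Nat.find_min' hq ⟨Nat.findGreatest_le b, hb⟩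
  refine ⟨p, Nat.find hq, hap, hpq, hqb, Nat.findGreatest_spec hab ha, hBq,
    fun k hpk hkq => Nat.findGreatest_is_greatest hpk (hkq.trans hqb),
    fun k hpk hkq hBk => Nat.find_min hq hkq ⟨hpk, hBk⟩⟩

theorem Nat.exists_first_last {P : ℕ → Prop} {d m₁ m₂ : ℕ} (h₁ : m₁ ≤ d) (h₂ : m₂ ≤ d)
    (hne : m₁ ≠ m₂) (hP₁ : P m₁) (hP₂ : P m₂) :
    ∃ M₁ M₂, M₁ < M₂ ∧ M₂ ≤ d ∧ P M₁ ∧ P M₂ ∧ (∀ m, m < M₁ → ¬P m) ∧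
      ∀ m, M₂ < m → m ≤ d → ¬P m := by
  classical
  have hex : ∃ m, P m := ⟨m₁, hP₁⟩
  have hlo₁ := Nat.find_min' hex hP₁
  have hlo₂ := Nat.find_min' hex hP₂
  have hhi₁ := Nat.le_findGreatest h₁ hP₁
  have hhi₂ := Nat.le_findGreatest h₂ hP₂
  exact ⟨Nat.find hex, Nat.findGreatest P d, by omega, Nat.findGreatest_le d, Nat.find_spec hex,
    Nat.findGreatest_spec h₁ hP₁, fun m hm => Nat.find_min hex hm,
    fun m hm hmd => Nat.findGreatest_is_greatest hm hmd⟩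

section InducedPaths

variable {V : Type} {G : SimpleGraph V}

theorem SimpleGraph.CliqueFree.not_adj_of_adj (hG : G.CliqueFree 3) {a b c : V} (hab : G.Adj a b)
    (hac : G.Adj a c) : ¬G.Adj b c :=
  fun hbc => isIndepSet_neighborSet_of_triangleFree G hG a hab hac hbc.ne hbc

theorem IsInducedPathW.reverse {a b : V} {p : G.Walk a b} (hp : IsInducedPathW G p) :
    IsInducedPathW G p.reverse := by
  refine ⟨hp.1.reverse, fun x y hx hy hxy => ?_⟩
  rw [Walk.support_reverse, List.mem_reverse] at hx hy
  simpa [Walk.toSubgraph_reverse] using hp.2 x y hx hy hxy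

theorem IsInducedPathW.cons {a b c : V} {p : G.Walk b c} (hp : IsInducedPathW G p)
    (hab : G.Adj a b) (ha : a ∉ p.support) (hnbr : ∀ x ∈ p.support, G.Adj a x → x = b) :
    IsInducedPathW G (Walk.cons hab p) := by
  refine ⟨(Walk.cons_isPath_iff hab p).2 ⟨hp.1, ha⟩, fun x y hx hy hxy => ?_⟩
  simp only [Walk.support_cons, List.mem_cons] at hx hy
  simp only [Walk.adj_toSubgraph_iff_mem_edges, Walk.edges_cons, List.mem_cons]
  rcases hx with rfl | hx <;> rcases hy with rfl | hy
  · exact absurd hxy (G.loopless.irrefl _)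
  · exact Or.inl (by rw [hnbr y hy hxy])
  · exact Or.inl (by rw [hnbr x hx hxy.symm, Sym2.eq_swap])
  · exact Or.inr (Walk.adj_toSubgraph_iff_mem_edges.1 (hp.2 x y hx hy hxy))

def IsChordlessPathVia (G : SimpleGraph V) {a b : V} (p : G.Walk a b) (S : Set V) : Prop :=
  IsInducedPathW G p ∧ 2 ≤ p.length ∧ ∀ z ∈ p.support, z = a ∨ z = b ∨ z ∈ S

theorem IsChordlessPathVia.reverse {a b : V} {p : G.Walk a b} {S : Set V}
    (hp : IsChordlessPathVia G p S) : IsChordlessPathVia G p.reverse S := by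
  refine ⟨hp.1.reverse, by simpa using hp.2.1, fun z hz => ?_⟩
  rw [Walk.support_reverse, List.mem_reverse] at hz
  rcases hp.2.2 z hz with h | h | h
  exacts [Or.inr (Or.inl h), Or.inl h, Or.inr (Or.inr h)]

theorem IsChordlessPathVia.cons {a b c : V} {p : G.Walk b c} {S : Set V}
    (hp : IsChordlessPathVia G p S) (hab : G.Adj a b) (ha : a ∉ p.support)
    (hnbr : ∀ x ∈ p.support, G.Adj a x → x = b) :
    IsChordlessPathVia G (Walk.cons hab p) (insert b S) := by
  refine ⟨hp.1.cons hab ha hnbr, by simp only [Walk.length_cons]; have := hp.2.1; omega,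
    fun z hz => ?_⟩
  simp only [Walk.support_cons, List.mem_cons] at hz
  rcases hz with h | hz
  · exact Or.inl h
  rcases hp.2.2 z hz with h | h | h
  exacts [Or.inr (Or.inr (Or.inl h)), Or.inr (Or.inl h), Or.inr (Or.inr (Or.inr h))]

theorem IsInducedPathW.exists_chordlessPathVia {x y a b : V} {p : G.Walk x y}
    (hp : IsInducedPathW G p) (hax : G.Adj a x) (hby : G.Adj b y) (ha : a ∉ p.support)
    (hb : b ∉ p.support) (hab : a ≠ b) (hnab : ¬G.Adj a b)
    (hanbr : ∀ z ∈ p.support, G.Adj a z → z = x) (hbnbr : ∀ z ∈ p.support, G.Adj b z → z = y) :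
    ∃ q : G.Walk a b, IsChordlessPathVia G q {z | z ∈ p.support} := by
  have hr : IsInducedPathW G (Walk.cons hby p.reverse) :=
    hp.reverse.cons hby (by simpa using hb) (by simpa using hbnbr)
  refine ⟨Walk.cons hax (Walk.cons hby p.reverse).reverse, ?_, by simp, fun z hz => ?_⟩
  · refine hr.reverse.cons hax (by simpa [hab] using ⟨ha, fun h => ha (h ▸ p.end_mem_support)⟩)
      fun z hz haz => ?_
    simp only [Walk.support_reverse, Walk.support_cons, List.mem_reverse, List.mem_cons] at hz
    rcases hz with rfl | hz
    · exact absurd haz hnab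
    · exact hanbr z (by simpa using hz) haz
  · simp only [Walk.support_cons, Walk.support_reverse, List.mem_cons, List.mem_reverse] at hz
    rcases hz with h | h | h
    exacts [Or.inl h, Or.inr (Or.inl h), Or.inr (Or.inr h)]

def Anticomplete (G : SimpleGraph V) (S T : Set V) : Prop :=
  ∀ x ∈ S, ∀ y ∈ T, x ≠ y ∧ ¬G.Adj x y

theorem Anticomplete.insert_left {S T : Set V} {x : V} (h : Anticomplete G S T)
    (hx : ∀ y ∈ T, x ≠ y ∧ ¬G.Adj x y) : Anticomplete G (insert x S) T := by
  rintro z (rfl | hz)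
  exacts [hx, h z hz]

theorem containsTheta_of_anticomplete {a b : V} {p₁ p₂ p₃ : G.Walk a b} {S₁ S₂ S₃ : Set V}
    (h₁ : IsChordlessPathVia G p₁ S₁) (h₂ : IsChordlessPathVia G p₂ S₂)
    (h₃ : IsChordlessPathVia G p₃ S₃) (h₁₂ : Anticomplete G S₁ S₂)
    (h₁₃ : Anticomplete G S₁ S₃) (h₂₃ : Anticomplete G S₂ S₃) : ContainsTheta G := by
  have inner : ∀ {p : G.Walk a b} {S : Set V}, IsChordlessPathVia G p S →
      ∀ z ∈ p.support, z ≠ a → z ≠ b → z ∈ S := fun hp z hz ha hb => by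
    rcases hp.2.2 z hz with h | h | h
    exacts [absurd h ha, absurd h hb, h]
  have meet : ∀ {S T : Set V} {p q : G.Walk a b}, IsChordlessPathVia G p S →
      IsChordlessPathVia G q T → Anticomplete G S T →
      ∀ w, w ∈ p.support → w ∈ q.support → w = a ∨ w = b := fun hp hq hST w hwp hwq => by
    by_contra! h
    exact (hST w (inner hp w hwp h.1 h.2) w (inner hq w hwq h.1 h.2)).1 rfl
  refine ⟨a, b, p₁, p₂, p₃, ⟨h₁.1, h₂.1, h₃.1⟩, ⟨h₁.2.1, h₂.2.1, h₃.2.1⟩, ?_, ?_⟩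
  · rintro w (⟨hw, hw'⟩ | ⟨hw, hw'⟩ | ⟨hw, hw'⟩)
    exacts [meet h₁ h₂ h₁₂ w hw hw', meet h₁ h₃ h₁₃ w hw hw', meet h₂ h₃ h₂₃ w hw hw']
  · rintro x y hxa hxb hya hyb (⟨hx, hy⟩ | ⟨hx, hy⟩ | ⟨hx, hy⟩)
    exacts [(h₁₂ x (inner h₁ x hx hxa hxb) y (inner h₂ y hy hya hyb)).2,
      (h₁₃ x (inner h₁ x hx hxa hxb) y (inner h₃ y hy hya hyb)).2,
      (h₂₃ x (inner h₂ x hx hxa hxb) y (inner h₃ y hy hya hyb)).2]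

end InducedPaths

section Holes

variable {V : Type} {G : SimpleGraph V} {n : ℕ} {f : ZMod n → V}

theorem ZMod.natCast_eq_natCast_add_one_iff {p q : ℕ} (hp : p < n) (hq : q < n) :
    (q : ZMod n) = p + 1 ↔ q = p + 1 ∨ (q = 0 ∧ p = n - 1) := by
  rw [← Nat.cast_add_one, ZMod.natCast_eq_natCast_iff', Nat.mod_eq_of_lt hq]
  rcases (Nat.succ_le_of_lt hp).lt_or_eq with h | h
  · rw [Nat.mod_eq_of_lt h]; omega
  · rw [show p + 1 = n from h, Nat.mod_self]; omega

theorem ZMod.exists_lt_eq_add_natCast [NeZero n] (i m : ZMod n) : ∃ k : ℕ, k < n ∧ m = i + k :=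
  ⟨(m - i).val, ZMod.val_lt _, by rw [ZMod.natCast_zmod_val]; ring⟩

theorem IsHoleEmb.natCast_inj (hf : IsHoleEmb G n f) {p q : ℕ} (hp : p < n) (hq : q < n)
    (h : f p = f q) : p = q := by
  have := (ZMod.natCast_eq_natCast_iff' p q n).1 (hf.2.1 h)
  rwa [Nat.mod_eq_of_lt hp, Nat.mod_eq_of_lt hq] at this

theorem IsHoleEmb.adj_natCast_iff (hf : IsHoleEmb G n f) {p q : ℕ} (hp : p < n) (hq : q < n) :
    G.Adj (f p) (f q) ↔ q = p + 1 ∨ p = q + 1 ∨ (p = 0 ∧ q = n - 1) ∨ (q = 0 ∧ p = n - 1) := by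
  rw [hf.2.2, ZMod.natCast_eq_natCast_add_one_iff hp hq,
    ZMod.natCast_eq_natCast_add_one_iff hq hp]
  omega

theorem IsHoleEmb.comp_add (hf : IsHoleEmb G n f) (c : ZMod n) :
    IsHoleEmb G n (fun m => f (c + m)) :=
  ⟨hf.1, fun _ _ h => add_left_cancel (hf.2.1 h), fun i j => by
    simp only [hf.2.2, add_assoc, add_right_inj]⟩

theorem IsHoleEmb.comp_sub (hf : IsHoleEmb G n f) (c : ZMod n) :
    IsHoleEmb G n (fun m => f (c - m)) :=
  ⟨hf.1, fun _ _ h => sub_right_injective (hf.2.1 h), fun i j => by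
    rw [hf.2.2]
    constructor <;> rintro (h | h)
    exacts [Or.inr (by linear_combination h), Or.inl (by linear_combination h),
      Or.inr (by linear_combination h), Or.inl (by linear_combination h)]⟩

def holeArc (f : ZMod n → V) (a b : ℕ) : Set V :=
  (fun k : ℕ => f k) '' Set.Icc a b

theorem holeArc_subset_range (a b : ℕ) : holeArc f a b ⊆ Set.range f :=
  fun _ ⟨k, _, hk⟩ => ⟨k, hk⟩

theorem IsHoleEmb.natCast_not_mem_holeArc (hf : IsHoleEmb G n f) {k a b : ℕ} (hk : k < n)
    (hb : b < n) (hkab : k < a ∨ b < k) : f k ∉ holeArc f a b := by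
  rintro ⟨l, ⟨hal, hlb⟩, h⟩
  have := hf.natCast_inj (by omega) hk h
  omega

theorem IsHoleEmb.exists_inducedPath_arc (hf : IsHoleEmb G n f) {a b : ℕ} (hab : a ≤ b)
    (hb : b < n) (hwrap : 0 < a ∨ b + 1 < n) :
    ∃ w : G.Walk (f a) (f b), IsInducedPathW G w ∧ ∀ z ∈ w.support, z ∈ holeArc f a b := by
  induction h : b - a generalizing a with
  | zero =>
    obtain rfl : a = b := by omega
    exact ⟨Walk.nil, ⟨Walk.IsPath.nil, fun x y hx hy hxy => by simp_all⟩,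
      fun z hz => ⟨a, ⟨le_rfl, le_rfl⟩, by simpa [eq_comm] using hz⟩⟩
  | succ L ih =>
    obtain ⟨w, hw, hws⟩ := ih (a := a + 1) (by omega) (by omega) (by omega)
    have hadj : G.Adj (f a) (f (a + 1 : ℕ)) :=
      (hf.adj_natCast_iff (by omega) (by omega)).2 (by omega)
    refine ⟨Walk.cons hadj w, hw.cons hadj (fun ha => ?_) fun z hz haz => ?_, fun z hz => ?_⟩
    · obtain ⟨k, ⟨hk₁, hk₂⟩, hka⟩ := hws _ ha
      have := hf.natCast_inj (by omega) (by omega) hka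
      omega
    · obtain ⟨k, ⟨hk₁, hk₂⟩, rfl⟩ := hws z hz
      have := (hf.adj_natCast_iff (by omega) (by omega)).1 haz
      obtain rfl : k = a + 1 := by omega
      rfl
    · simp only [Walk.support_cons, List.mem_cons] at hz
      rcases hz with rfl | hz
      · exact ⟨a, ⟨le_rfl, hab⟩, rfl⟩
      · obtain ⟨k, ⟨hk₁, hk₂⟩, rfl⟩ := hws z hz
        exact ⟨k, ⟨by omega, hk₂⟩, rfl⟩

theorem IsHoleEmb.anticomplete_holeArc (hf : IsHoleEmb G n f) {a₁ b₁ a₂ b₂ : ℕ}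
    (h₁₂ : b₁ + 2 ≤ a₂) (h₂₁ : b₂ + 2 ≤ n + a₁) (hb₂ : b₂ < n) :
    Anticomplete G (holeArc f a₁ b₁) (holeArc f a₂ b₂) := by
  rintro _ ⟨k, hk, rfl⟩ _ ⟨l, hl, rfl⟩
  simp only [Set.mem_Icc] at hk hl
  refine ⟨fun h => ?_, fun h => ?_⟩
  · have := hf.natCast_inj (by omega) (by omega) h
    omega
  · have := (hf.adj_natCast_iff (by omega) (by omega)).1 h
    omega

theorem IsHoleEmb.exists_chordlessPathVia_arc (hf : IsHoleEmb G n f) {x y : V} {p q : ℕ}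
    (hpq : p ≤ q) (hq : q < n) (hwrap : 0 < p ∨ q + 1 < n) (hx : x ∉ holeArc f p q)
    (hy : y ∉ holeArc f p q) (hxy : x ≠ y) (hnxy : ¬G.Adj x y) (hxp : G.Adj x (f p))
    (hyq : G.Adj y (f q)) (hxnbr : ∀ k : ℕ, p < k → k ≤ q → ¬G.Adj x (f k))
    (hynbr : ∀ k : ℕ, p ≤ k → k < q → ¬G.Adj y (f k)) :
    ∃ P : G.Walk x y, IsChordlessPathVia G P (holeArc f p q) := by
  obtain ⟨w, hw, hws⟩ := hf.exists_inducedPath_arc hpq hq hwrap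
  obtain ⟨P, hP⟩ := hw.exists_chordlessPathVia hxp hyq (fun h => hx (hws _ h))
    (fun h => hy (hws _ h)) hxy hnxy
    (fun z hz hxz => by
      obtain ⟨k, hk, rfl⟩ := hws z hz
      by_contra hne
      exact hxnbr k (lt_of_le_of_ne hk.1 fun h => hne (h ▸ rfl)) hk.2 hxz)
    (fun z hz hyz => by
      obtain ⟨k, hk, rfl⟩ := hws z hz
      by_contra hne
      exact hynbr k hk.1 (lt_of_le_of_ne hk.2 fun h => hne (h ▸ rfl)) hyz)
  exact ⟨P, hP.1, hP.2.1, fun z hz => (hP.2.2 z hz).imp_right (Or.imp_right (hws z))⟩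

end Holes

section Sector

variable {V : Type} {G : SimpleGraph V} {n : ℕ} {f : ZMod n → V} {u v : V} {d M₁ M₂ : ℕ}

/-- The `u`-sector `f 0, …, f d` of the hole `f`, in which `f M₁` and `f M₂` are the first and
the last neighbour of the second center `v`. -/
structure SectorConfig (G : SimpleGraph V) (n : ℕ) (f : ZMod n → V) (u v : V) (d M₁ M₂ : ℕ) :
    Prop where
  hole : IsHoleEmb G n f
  u_not_mem : u ∉ Set.range f
  v_not_mem : v ∉ Set.range f
  ne : u ≠ v
  not_adj : ¬G.Adj u v
  d_add_three_le : d + 3 ≤ n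
  adj_zero : G.Adj u (f 0)
  adj_d : G.Adj u (f d)
  not_adj_interior : ∀ m : ℕ, 0 < m → m < d → ¬G.Adj u (f m)
  gap : M₁ + 2 ≤ M₂
  M₂_le : M₂ ≤ d
  adj_M₁ : G.Adj v (f M₁)
  adj_M₂ : G.Adj v (f M₂)
  not_adj_lt : ∀ m : ℕ, m < M₁ → ¬G.Adj v (f m)
  not_adj_gt : ∀ m : ℕ, M₂ < m → m ≤ d → ¬G.Adj v (f m)

namespace SectorConfig

theorem exists_of_two_adj (hTri : G.CliqueFree 3) (hf : IsHoleEmb G n f)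
    (hu : u ∉ Set.range f) (hv : v ∉ Set.range f) (hne : u ≠ v) (huv : ¬G.Adj u v)
    (hu0 : G.Adj u (f 0)) (hud : G.Adj u (f d)) (hsec : ∀ m : ℕ, 0 < m → m < d → ¬G.Adj u (f m))
    {t : ℕ} (hdt : d < t) (htn : t < n) (hut : G.Adj u (f t)) {m₁ m₂ : ℕ} (h₁ : m₁ ≤ d)
    (h₂ : m₂ ≤ d) (hm : m₁ ≠ m₂) (hv₁ : G.Adj v (f m₁)) (hv₂ : G.Adj v (f m₂)) :
    ∃ M₁ M₂, SectorConfig G n f u v d M₁ M₂ := by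
  have := hf.1
  obtain ⟨M₁, M₂, hlt, hM₂, hvM₁, hvM₂, hlo, hhi⟩ :=
    Nat.exists_first_last (P := fun m => G.Adj v (f m)) h₁ h₂ hm hv₁ hv₂
  have hgap : M₁ + 2 ≤ M₂ := by
    by_contra h
    exact hTri.not_adj_of_adj hvM₁ hvM₂ ((hf.adj_natCast_iff (by omega) (by omega)).2 (by omega))
  have hd₁ : d ≠ n - 1 := by
    rintro rfl
    exact hTri.not_adj_of_adj hu0 hud
      (by simpa using (hf.adj_natCast_iff (p := 0) (by omega) (by omega)).2 (by omega))
  have hd₂ : d ≠ n - 2 := by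
    rintro rfl
    exact hTri.not_adj_of_adj hud hut ((hf.adj_natCast_iff (by omega) htn).2 (by omega))
  exact ⟨M₁, M₂, hf, hu, hv, hne, huv, by omega, hu0, hud, hsec, hgap, hM₂, hvM₁, hvM₂, hlo, hhi⟩

theorem u_not_mem_holeArc (S : SectorConfig G n f u v d M₁ M₂) (a b : ℕ) : u ∉ holeArc f a b :=
  fun h => S.u_not_mem (holeArc_subset_range a b h)

theorem v_not_mem_holeArc (S : SectorConfig G n f u v d M₁ M₂) (a b : ℕ) : v ∉ holeArc f a b :=
  fun h => S.v_not_mem (holeArc_subset_range a b h)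

theorem exists_path_low (S : SectorConfig G n f u v d M₁ M₂) :
    ∃ P : G.Walk u v, IsChordlessPathVia G P (holeArc f 0 M₁) := by
  have := S.gap; have := S.M₂_le; have := S.d_add_three_le
  exact S.hole.exists_chordlessPathVia_arc (Nat.zero_le _) (by omega) (Or.inr (by omega))
    (S.u_not_mem_holeArc _ _) (S.v_not_mem_holeArc _ _) S.ne S.not_adj
    (by simpa using S.adj_zero) S.adj_M₁ (fun k hk _ => S.not_adj_interior k hk (by omega))
    (fun k _ hk => S.not_adj_lt k hk)

theorem exists_path_high (S : SectorConfig G n f u v d M₁ M₂) :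
    ∃ P : G.Walk v u, IsChordlessPathVia G P (holeArc f M₂ d) := by
  have := S.gap; have := S.d_add_three_le
  exact S.hole.exists_chordlessPathVia_arc S.M₂_le (by omega) (Or.inl (by omega))
    (S.v_not_mem_holeArc _ _) (S.u_not_mem_holeArc _ _) S.ne.symm (fun h => S.not_adj h.symm)
    S.adj_M₂ S.adj_d S.not_adj_gt (fun k hk hkd => S.not_adj_interior k (by omega) hkd)

theorem containsTheta_of_outer_path (S : SectorConfig G n f u v d M₁ M₂) {p q : ℕ}
    (hp : d + 2 ≤ p) (hq : q ≤ n - 2)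
    {P : G.Walk v u} (hP : IsChordlessPathVia G P (holeArc f p q)) : ContainsTheta G := by
  have := S.gap; have := S.M₂_le; have := S.d_add_three_le
  obtain ⟨P₁, h₁⟩ := S.exists_path_low
  obtain ⟨P₂, h₂⟩ := S.exists_path_high
  exact containsTheta_of_anticomplete h₁.reverse h₂ hP
    (S.hole.anticomplete_holeArc (by omega) (by omega) (by omega))
    (S.hole.anticomplete_holeArc (by omega) (by omega) (by omega))
    (S.hole.anticomplete_holeArc (by omega) (by omega) (by omega))

theorem exists_path_from_end (S : SectorConfig G n f u v d M₁ M₂) (hvd : ¬G.Adj v (f d)) :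
    ∃ P : G.Walk (f d) v, IsChordlessPathVia G P (insert u (holeArc f 0 M₁)) := by
  have := S.gap; have := S.M₂_le; have := S.d_add_three_le
  obtain ⟨P, hP⟩ := S.exists_path_low
  refine ⟨_, hP.cons S.adj_d.symm (fun h => ?_) fun z hz hdz => ?_⟩
  · rcases hP.2.2 _ h with h | h | h
    · exact S.u_not_mem ⟨d, h⟩
    · exact S.v_not_mem ⟨d, h⟩
    · exact S.hole.natCast_not_mem_holeArc (by omega) (by omega) (Or.inr (by omega)) h
  · rcases hP.2.2 z hz with rfl | rfl | ⟨k, ⟨-, hk⟩, rfl⟩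
    · rfl
    · exact absurd hdz.symm hvd
    · have := (S.hole.adj_natCast_iff (by omega) (by omega)).1 hdz
      omega

theorem containsTheta_of_adj_succ (S : SectorConfig G n f u v d M₁ M₂) (hTri : G.CliqueFree 3)
    (hv : G.Adj v (f (d + 1 : ℕ))) : ContainsTheta G := by
  have := S.gap; have := S.M₂_le; have := S.d_add_three_le
  have hf := S.hole
  have hd : G.Adj (f d) (f (d + 1 : ℕ)) := (hf.adj_natCast_iff (by omega) (by omega)).2 (by omega)
  have hvd : ¬G.Adj v (f d) := fun h => hTri.not_adj_of_adj h hv hd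
  have hM₂ : M₂ < d := lt_of_le_of_ne S.M₂_le fun h => hvd (h ▸ S.adj_M₂)
  have hvfd : v ≠ f d := fun h => S.v_not_mem ⟨d, h.symm⟩
  obtain ⟨P₁, h₁⟩ := hf.exists_chordlessPathVia_arc le_rfl (by omega) (Or.inl (by omega))
    (S.v_not_mem_holeArc _ _) (hf.natCast_not_mem_holeArc (by omega) (by omega) (by omega))
    hvfd hvd hv hd (fun k _ _ => by omega) (fun k _ _ => by omega)
  obtain ⟨P₂, h₂⟩ := hf.exists_chordlessPathVia_arc (p := M₂) (q := d - 1) (by omega) (by omega)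
    (Or.inl (by omega)) (S.v_not_mem_holeArc _ _)
    (hf.natCast_not_mem_holeArc (by omega) (by omega) (by omega)) hvfd hvd S.adj_M₂
    ((hf.adj_natCast_iff (by omega) (by omega)).2 (by omega))
    (fun k hk hkd => S.not_adj_gt k hk (by omega))
    (fun k _ hk h => by have := (hf.adj_natCast_iff (by omega) (by omega)).1 h; omega)
  obtain ⟨P₃, h₃⟩ := S.exists_path_from_end hvd
  refine containsTheta_of_anticomplete h₃.reverse h₂ h₁
    ((hf.anticomplete_holeArc (by omega) (by omega) (by omega)).insert_left ?_)
    ((hf.anticomplete_holeArc (by omega) (by omega) (by omega)).insert_left ?_)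
    (hf.anticomplete_holeArc (by omega) (by omega) (by omega))
  · rintro _ ⟨k, ⟨hk₁, hk₂⟩, rfl⟩
    exact ⟨fun h => S.u_not_mem ⟨k, h.symm⟩, S.not_adj_interior k (by omega) (by omega)⟩
  · rintro _ ⟨k, ⟨hk₁, hk₂⟩, rfl⟩
    obtain rfl : k = d + 1 := by omega
    exact ⟨fun h => S.u_not_mem ⟨_, h.symm⟩, fun h => hTri.not_adj_of_adj S.adj_d h hd⟩

theorem reflect (S : SectorConfig G n f u v d M₁ M₂) :
    SectorConfig G n (fun m => f (d - m)) u v d (d - M₂) (d - M₁) := by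
  have := S.gap; have := S.M₂_le
  have hr : ∀ k : ℕ, k ≤ d → f ((d : ZMod n) - k) = f (d - k : ℕ) := fun k hk => by
    rw [Nat.cast_sub hk]
  refine ⟨S.hole.comp_sub d, fun ⟨m, hm⟩ => S.u_not_mem ⟨_, hm⟩,
    fun ⟨m, hm⟩ => S.v_not_mem ⟨_, hm⟩, S.ne, S.not_adj, S.d_add_three_le, by simpa using S.adj_d,
    by simpa using S.adj_zero, fun m hm hmd => ?_, by omega, by omega, ?_, ?_, fun m hm => ?_,
    fun m hm hmd => ?_⟩
  · rw [hr m hmd.le]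
    exact S.not_adj_interior _ (by omega) (by omega)
  · rw [hr _ (by omega), Nat.sub_sub_self S.M₂_le]
    exact S.adj_M₂
  · rw [hr _ (by omega), Nat.sub_sub_self (by omega)]
    exact S.adj_M₁
  · rw [hr m (by omega)]
    exact S.not_adj_gt _ (by omega) (by omega)
  · rw [hr m hmd]
    exact S.not_adj_lt _ (by omega)

theorem containsTheta_of_adj_pred (S : SectorConfig G n f u v d M₁ M₂) (hTri : G.CliqueFree 3)
    (hv : G.Adj v (f (n - 1 : ℕ))) : ContainsTheta G := by
  refine S.reflect.containsTheta_of_adj_succ hTri ?_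
  have := S.d_add_three_le
  convert hv using 2
  rw [Nat.cast_sub (by omega : 1 ≤ n), ZMod.natCast_self]
  push_cast
  ring

theorem containsTheta_of_outer_nbrs (S : SectorConfig G n f u v d M₁ M₂) (hTri : G.CliqueFree 3)
    {s t : ℕ} (hdt : d < t) (htn : t < n) (hut : G.Adj u (f t)) (hds : d < s) (hsn : s < n)
    (hvs : G.Adj v (f s)) : ContainsTheta G := by
  have := S.d_add_three_le
  have hf := S.hole
  by_cases hsucc : G.Adj v (f (d + 1 : ℕ))
  · exact S.containsTheta_of_adj_succ hTri hsucc
  by_cases hpred : G.Adj v (f (n - 1 : ℕ))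
  · exact S.containsTheta_of_adj_pred hTri hpred
  have ht₁ : t ≠ d + 1 := by
    rintro rfl
    exact hTri.not_adj_of_adj S.adj_d hut ((hf.adj_natCast_iff (by omega) htn).2 (by omega))
  have ht₂ : t ≠ n - 1 := by
    rintro rfl
    exact hTri.not_adj_of_adj S.adj_zero hut
      (by simpa using (hf.adj_natCast_iff (p := 0) (by omega) htn).2 (by omega))
  have hs₁ : s ≠ d + 1 := by rintro rfl; exact hsucc hvs
  have hs₂ : s ≠ n - 1 := by rintro rfl; exact hpred hvs
  rcases le_total t s with hts | hst
  · obtain ⟨p, q, htp, hpq, hqs, hup, hvq, hu, hv⟩ :=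
      Nat.exists_nearest_pair (A := fun k => G.Adj u (f k)) (B := fun k => G.Adj v (f k))
        hts hut hvs
    obtain ⟨P, hP⟩ := hf.exists_chordlessPathVia_arc hpq (by omega) (Or.inl (by omega))
      (S.u_not_mem_holeArc _ _) (S.v_not_mem_holeArc _ _) S.ne S.not_adj hup hvq hu hv
    exact S.containsTheta_of_outer_path (by omega) (by omega) hP.reverse
  · obtain ⟨p, q, hsp, hpq, hqt, hvp, huq, hv, hu⟩ :=
      Nat.exists_nearest_pair (A := fun k => G.Adj v (f k)) (B := fun k => G.Adj u (f k))
        hst hvs hut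
    obtain ⟨P, hP⟩ := hf.exists_chordlessPathVia_arc hpq (by omega) (Or.inl (by omega))
      (S.v_not_mem_holeArc _ _) (S.u_not_mem_holeArc _ _) S.ne.symm (fun h => S.not_adj h.symm)
      hvp huq hv hu
    exact S.containsTheta_of_outer_path (by omega) (by omega) hP

end SectorConfig

end Sector

section Wheels

variable {V : Type} {G : SimpleGraph V} {n : ℕ} {f : ZMod n → V} {u v : V} {i : ZMod n} {d : ℕ}

theorem IsSector.exists_adj_outside (hS : IsSector G n f u i d)
    (hcard : 3 ≤ {m | G.Adj u (f m)}.ncard) : ∃ t : ℕ, d < t ∧ t < n ∧ G.Adj u (f (i + t)) := by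
  obtain ⟨-, hdn, -, -, hint⟩ := hS
  have : NeZero n := ⟨by omega⟩
  by_contra! h
  have hsub : {m | G.Adj u (f m)} ⊆ {i, i + d} := by
    intro m hm
    obtain ⟨k, hk, rfl⟩ := ZMod.exists_lt_eq_add_natCast i m
    rcases lt_trichotomy k d with hkd | rfl | hkd
    · rcases Nat.eq_zero_or_pos k with rfl | hk0
      · simp
      · exact absurd hm (hint k hk0 hkd)
    · exact Or.inr rfl
    · exact absurd hm (h k hkd hk)
  have := (Set.ncard_le_ncard hsub (Set.toFinite _)).trans (Set.ncard_insert_le _ _)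
  rw [Set.ncard_singleton] at this
  omega

theorem IsSector.nestedCfg (hS : IsSector G n f u i d)
    (hv : ∀ s : ℕ, d < s → s < n → ¬G.Adj v (f (i + s))) : NestedCfg G n f u v := by
  obtain ⟨hd, hdn, -, -, hint⟩ := hS
  have : NeZero n := ⟨by omega⟩
  refine ⟨i + d, n - d, by omega, by omega, fun m hm => ?_, fun m hm => ?_⟩
  · obtain ⟨k, hk, rfl⟩ := ZMod.exists_lt_eq_add_natCast i m
    rcases Nat.eq_zero_or_pos k with rfl | hk0
    · exact ⟨n - d, le_rfl, by push_cast [Nat.cast_sub hdn.le, ZMod.natCast_self]; ring⟩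
    · have hdk : d ≤ k := by by_contra h; exact hint k hk0 (by omega) hm
      exact ⟨k - d, by omega, by push_cast [Nat.cast_sub hdk]; ring⟩
  · obtain ⟨k, hk, rfl⟩ := ZMod.exists_lt_eq_add_natCast i m
    have hkd : k ≤ d := by by_contra h; exact hv k (by omega) hk hm
    exact ⟨k, by omega, by push_cast [Nat.cast_sub hdn.le, ZMod.natCast_self]; ring⟩

theorem NestedCfg.symm (h : NestedCfg G n f u v) : NestedCfg G n f v u := by
  obtain ⟨i, d, hd, hdn, hu, hv⟩ := h
  refine ⟨i + d, n - d, by omega, by omega, hv, fun m hm => ?_⟩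
  obtain ⟨e, he, rfl⟩ := hu m hm
  exact ⟨e, by omega, by push_cast [Nat.cast_sub hdn.le, ZMod.natCast_self]; ring⟩

theorem Is2WheelCfg.symm (h : Is2WheelCfg G n f u v) : Is2WheelCfg G n f v u :=
  ⟨h.1, h.2.1.symm, h.2.2.2.1, h.2.2.1, h.2.2.2.2.2, h.2.2.2.2.1⟩

theorem IsSector.nestedCfg_of_two_adj (hTheta : ¬ContainsTheta G) (hTri : G.CliqueFree 3)
    (hW : Is2WheelCfg G n f u v) (huv : ¬G.Adj u v) (hS : IsSector G n f u i d) {m₁ m₂ : ℕ}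
    (h₁ : m₁ ≤ d) (h₂ : m₂ ≤ d) (hv₁ : G.Adj v (f (i + m₁))) (hv₂ : G.Adj v (f (i + m₂)))
    (hne : i + (m₁ : ZMod n) ≠ i + m₂) : NestedCfg G n f u v := by
  obtain ⟨hf, huvne, hu, hv, hucard, -⟩ := hW
  by_contra hN
  obtain ⟨s, hds, hsn, hvs⟩ : ∃ s : ℕ, d < s ∧ s < n ∧ G.Adj v (f (i + s)) := by
    by_contra! h
    exact hN (hS.nestedCfg h)
  obtain ⟨t, hdt, htn, hut⟩ := hS.exists_adj_outside hucard
  obtain ⟨M₁, M₂, S⟩ := SectorConfig.exists_of_two_adj (f := fun m => f (i + m)) hTri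
    (hf.comp_add i) (fun ⟨m, hm⟩ => hu ⟨_, hm⟩) (fun ⟨m, hm⟩ => hv ⟨_, hm⟩) huvne huv
    (by simpa using hS.2.2.1) hS.2.2.2.1 hS.2.2.2.2 hdt htn hut h₁ h₂
    (fun h => hne (h ▸ rfl)) hv₁ hv₂
  exact hTheta (S.containsTheta_of_outer_nbrs hTri hdt htn hut hds hsn hvs)

end Wheels

/-- In a (theta, triangle)-free graph, if a 2-wheel with non-adjacent
centers is not nested, then every `u`-sector contains at most one neighbor of `v` and
every `v`-sector contains at most one neighbor of `u`. -/
theorem statement4 (G : SimpleGraph V) (hTheta : ¬ContainsTheta G) (hTri : G.CliqueFree 3)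
    (n : ℕ) (f : ZMod n → V) (u v : V)
    (hW : Is2WheelCfg G n f u v) (huv : ¬G.Adj u v)
    (hnot : ¬NestedCfg G n f u v) :
    (∀ (i : ZMod n) (d : ℕ), IsSector G n f u i d →
      ∀ m₁ m₂ : ℕ, m₁ ≤ d → m₂ ≤ d →
        G.Adj v (f (i + (m₁ : ZMod n))) → G.Adj v (f (i + (m₂ : ZMod n))) →
        i + (m₁ : ZMod n) = i + (m₂ : ZMod n)) ∧
    (∀ (i : ZMod n) (d : ℕ), IsSector G n f v i d →
      ∀ m₁ m₂ : ℕ, m₁ ≤ d → m₂ ≤ d →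
        G.Adj u (f (i + (m₁ : ZMod n))) → G.Adj u (f (i + (m₂ : ZMod n))) →
        i + (m₁ : ZMod n) = i + (m₂ : ZMod n)) := by
  refine ⟨fun i d hS m₁ m₂ h₁ h₂ hv₁ hv₂ => ?_, fun i d hS m₁ m₂ h₁ h₂ hu₁ hu₂ => ?_⟩
  · by_contra hne
    exact hnot (hS.nestedCfg_of_two_adj hTheta hTri hW huv h₁ h₂ hv₁ hv₂ hne)
  · by_contra hne
    exact hnot (hS.nestedCfg_of_two_adj hTheta hTri hW.symm (fun h => huv h.symm) h₁ h₂ hu₁ hu₂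
      hne).symm
end
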